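/- arXiv:2507.01920 — 5 statements merged into one kernel-verified Lean document; each statement's English description precedes it below -/
import Mathlib

section
/- Let ε > 0, T > 0, and let α : [0,T] → ℝ be continuous; set A(t) := exp(∫₀ᵗ α(s) ds). Suppose u : [0,∞)×[0,T] → ℝ is continuous and bounded, is C¹ in t and C² in x on (0,∞)×(0,T), and satisfies ∂_t u + u ∂_x u + α(t) u = ε A(t)⁻¹ ∂²_x u on (0,∞)×(0,T). Then for all (x,t) ∈ (0,∞)×(0,T), |u(x,t)| ≤ exp(∫₀ᵀ |α(s)| ds) · ( sup_{x>0} |u(x,0)| + sup_{0<t<T} |u(0,t)| ). -/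
open MeasureTheory Set Filter Topology

private lemma aux_deriv_nonneg {f : ℝ → ℝ} {f' a c : ℝ} (hac : a < c)
    (hd : HasDerivAt f f' c) (hmax : ∀ s ∈ Set.Icc a c, f s ≤ f c) : 0 ≤ f' := by
  have h := hasDerivAt_iff_tendsto_slope.mp hd
  have h2 : Tendsto (slope f c) (𝓝[<] c) (𝓝 f') :=
    h.mono_left (nhdsWithin_mono c (fun x hx => ne_of_lt hx))
  refine ge_of_tendsto h2 ?_
  filter_upwards [Ioo_mem_nhdsLT_of_mem (⟨hac, le_refl c⟩ : c ∈ Set.Ioc a c)] with s hs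
  rw [slope_def_field]
  have h1 : f s - f c ≤ 0 := sub_nonpos.2 (hmax s ⟨hs.1.le, hs.2.le⟩)
  have h3 : s - c ≤ 0 := sub_nonpos.2 hs.2.le
  exact div_nonneg_iff.mpr (Or.inr ⟨h1, h3⟩)

private lemma aux_second_deriv_nonpos {f : ℝ → ℝ} {a b c : ℝ} (hc : c ∈ Set.Ioo a b)
    (hd : ∀ y ∈ Set.Ioo a b, DifferentiableAt ℝ f y)
    (hd2 : DifferentiableAt ℝ (deriv f) c)
    (hmax : ∀ y ∈ Set.Ioo a b, f y ≤ f c) :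
    deriv f c = 0 ∧ deriv (deriv f) c ≤ 0 := by
  have hloc : IsLocalMax f c := by
    filter_upwards [isOpen_Ioo.mem_nhds hc] using hmax
  have hz : deriv f c = 0 := hloc.deriv_eq_zero
  refine ⟨hz, ?_⟩
  by_contra hpos
  push_neg at hpos
  have hds := hasDerivAt_iff_tendsto_slope.mp hd2.hasDerivAt
  have h2 : Tendsto (slope (deriv f) c) (𝓝[>] c) (𝓝 (deriv (deriv f) c)) :=
    hds.mono_left (nhdsWithin_mono c (fun x hx => ne_of_gt (hx : c < x)))
  have hev : ∀ᶠ x in 𝓝[>] c, 0 < slope (deriv f) c x :=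
    h2.eventually (eventually_gt_nhds hpos)
  have hev2 : ∀ᶠ x in 𝓝[>] c, 0 < deriv f x := by
    filter_upwards [hev, self_mem_nhdsWithin] with x hx hx'
    rw [slope_def_field, hz, sub_zero] at hx
    have hxc : 0 < x - c := sub_pos.2 hx'
    have := mul_pos hx hxc
    rwa [div_mul_cancel₀ _ (ne_of_gt hxc)] at this
  obtain ⟨r, hrc, hr⟩ := (mem_nhdsGT_iff_exists_Ioo_subset).mp hev2
  set r' := min r b with hr'
  have hcr' : c < r' := lt_min hrc hc.2
  have hsub : Set.Ico c r' ⊆ Set.Ioo a b := fun x hx =>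
    ⟨lt_of_lt_of_le hc.1 hx.1, lt_of_lt_of_le hx.2 (min_le_right _ _)⟩
  have hmono : StrictMonoOn f (Set.Ico c r') := by
    apply strictMonoOn_of_deriv_pos (convex_Ico c r')
    · exact fun x hx => (hd x (hsub hx)).continuousAt.continuousWithinAt
    · intro x hx
      rw [interior_Ico] at hx
      exact hr ⟨hx.1, lt_of_lt_of_le hx.2 (min_le_left _ _)⟩
  have hm : (c + r') / 2 ∈ Set.Ico c r' := ⟨by linarith, by linarith⟩
  have := hmono (Set.left_mem_Ico.2 hcr') hm (by simp only [Set.mem_Ico] at hm ⊢; linarith [hm.1])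
  exact absurd (hmax _ (hsub hm)) (not_le.2 this)

set_option maxHeartbeats 2000000 in
/-- Maximum-principle estimate (2.17) for the viscous damped Burgers equation on the
quarter plane: if `u` solves `u_t + u u_x + α(t) u = ε A(t)⁻¹ u_xx` on `(0,∞)×(0,T)`,
is continuous and bounded on `[0,∞)×[0,T]`, then
`|u(x,t)| ≤ exp(∫₀ᵀ |α|) (sup_{x>0}|u(x,0)| + sup_{0<t<T}|u(0,t)|)`. -/
theorem damped_burgers_max_principle
    (ε T : ℝ) (hε : 0 < ε) (hT : 0 < T)
    (α : ℝ → ℝ) (hα : ContinuousOn α (Set.Icc 0 T))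
    (A : ℝ → ℝ) (hA : ∀ t, A t = Real.exp (∫ s in (0:ℝ)..t, α s))
    (u : ℝ → ℝ → ℝ)
    (huc : ContinuousOn (fun z : ℝ × ℝ => u z.1 z.2) (Set.Ici 0 ×ˢ Set.Icc 0 T))
    (hub : ∃ M, ∀ x ∈ Set.Ici (0:ℝ), ∀ t ∈ Set.Icc (0:ℝ) T, |u x t| ≤ M)
    -- C¹ in t on (0,∞)×(0,T)
    (hut : ∀ x ∈ Set.Ioi (0:ℝ), ∀ t ∈ Set.Ioo (0:ℝ) T,
      DifferentiableAt ℝ (fun s => u x s) t)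
    (hutc : ContinuousOn (fun z : ℝ × ℝ => deriv (fun s => u z.1 s) z.2)
      (Set.Ioi 0 ×ˢ Set.Ioo 0 T))
    -- C² in x on (0,∞)×(0,T)
    (hux : ∀ x ∈ Set.Ioi (0:ℝ), ∀ t ∈ Set.Ioo (0:ℝ) T,
      DifferentiableAt ℝ (fun y => u y t) x)
    (huxx : ∀ x ∈ Set.Ioi (0:ℝ), ∀ t ∈ Set.Ioo (0:ℝ) T,
      DifferentiableAt ℝ (fun y => deriv (fun z => u z t) y) x)
    (huxc : ContinuousOn (fun z : ℝ × ℝ => deriv (fun y => u y z.2) z.1)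
      (Set.Ioi 0 ×ˢ Set.Ioo 0 T))
    (huxxc : ContinuousOn
      (fun z : ℝ × ℝ => deriv (fun y => deriv (fun w => u w z.2) y) z.1)
      (Set.Ioi 0 ×ˢ Set.Ioo 0 T))
    -- the equation
    (heq : ∀ x ∈ Set.Ioi (0:ℝ), ∀ t ∈ Set.Ioo (0:ℝ) T,
      deriv (fun s => u x s) t + u x t * deriv (fun y => u y t) x + α t * u x t
        = ε * (A t)⁻¹ * deriv (fun y => deriv (fun z => u z t) y) x) :
    ∀ x ∈ Set.Ioi (0:ℝ), ∀ t ∈ Set.Ioo (0:ℝ) T,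
      |u x t| ≤ Real.exp (∫ s in (0:ℝ)..T, |α s|)
        * ((⨆ y : Set.Ioi (0:ℝ), |u y 0|) + (⨆ s : Set.Ioo (0:ℝ) T, |u 0 s|)) := by
  obtain ⟨M, hM⟩ := hub
  intro x₀ hx₀ t₀ ht₀
  have hx₀' : (0:ℝ) < x₀ := hx₀
  set F : ℝ → ℝ := fun t => ∫ s in (0:ℝ)..t, α s with hF
  set I : ℝ := ∫ s in (0:ℝ)..T, |α s| with hI
  set E : ℝ := Real.exp I with hE
  set B1 : ℝ := ⨆ y : Set.Ioi (0:ℝ), |u y 0| with hB1def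
  set B2 : ℝ := ⨆ s : Set.Ioo (0:ℝ) T, |u 0 s| with hB2def
  have hM0 : 0 ≤ M :=
    le_trans (abs_nonneg _) (hM 0 (Set.mem_Ici.mpr le_rfl) 0 ⟨le_rfl, hT.le⟩)
  -- integrability facts
  have hint : ∀ t ∈ Set.Icc (0:ℝ) T, IntervalIntegrable α volume 0 t := by
    intro t ht
    apply (hα.mono ?_).intervalIntegrable
    rw [Set.uIcc_of_le ht.1]
    exact Set.Icc_subset_Icc le_rfl ht.2
  have hintabs : ∀ t ∈ Set.Icc (0:ℝ) T, IntervalIntegrable (fun s => |α s|) volume 0 t := by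
    intro t ht
    apply ((hα.mono ?_).abs).intervalIntegrable
    rw [Set.uIcc_of_le ht.1]
    exact Set.Icc_subset_Icc le_rfl ht.2
  -- continuity of F
  have hFc : ContinuousOn F (Set.Icc 0 T) := by
    have := intervalIntegral.continuousOn_primitive_interval
      (f := α) (a := 0) (b := T) (μ := volume)
      (by rw [Set.uIcc_of_le hT.le]
          exact (hα.mono (by simp [Set.uIcc_of_le hT.le])).integrableOn_compact isCompact_Icc)
    rwa [Set.uIcc_of_le hT.le] at this
  -- FTC derivative of F
  have hFd : ∀ t ∈ Set.Ioo (0:ℝ) T, HasDerivAt F (α t) t := by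
    intro t ht
    have hmem : Set.Icc (0:ℝ) T ∈ 𝓝 t := Icc_mem_nhds ht.1 ht.2
    have hca : ContinuousAt α t := hα.continuousAt hmem
    exact intervalIntegral.integral_hasDerivAt_right (hint t ⟨ht.1.le, ht.2.le⟩)
      ⟨Set.Icc 0 T, hmem, (hα.aestronglyMeasurable measurableSet_Icc)⟩ hca
  -- ratio bound
  have hratio : ∀ s ∈ Set.Icc (0:ℝ) T, ∀ t ∈ Set.Icc (0:ℝ) T, F s - F t ≤ I := by
    intro s hs t ht
    have hsub : F s - F t = ∫ r in t..s, α r := by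
      rw [hF]; simp only
      rw [← intervalIntegral.integral_interval_sub_left (hint s hs) (hint t ht)]
    rw [hsub, hI]
    have habs : ∀ a b : ℝ, a ∈ Set.Icc (0:ℝ) T → b ∈ Set.Icc (0:ℝ) T → a ≤ b →
        |∫ r in a..b, α r| ≤ ∫ s in (0:ℝ)..T, |α s| := by
      intro a b ha hb hab
      calc |∫ r in a..b, α r| ≤ ∫ r in a..b, |α r| :=
            intervalIntegral.abs_integral_le_integral_abs hab
        _ ≤ ∫ s in (0:ℝ)..T, |α s| := by
            apply intervalIntegral.integral_mono_interval ha.1 hab hb.2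
            · filter_upwards with x using abs_nonneg _
            · exact hintabs T ⟨hT.le, le_rfl⟩
    rcases le_total t s with h | h
    · exact le_trans (le_abs_self _) (habs t s ht hs h)
    · rw [intervalIntegral.integral_symm]
      exact le_trans (neg_le_abs _) (habs s t hs ht h)
  have hF0 : F 0 = 0 := intervalIntegral.integral_same
  have hApos : ∀ t, 0 < A t := fun t => by rw [hA t]; exact Real.exp_pos _
  have hA0 : A 0 = 1 := by rw [hA 0]; simpa using Real.exp_zero
  have hI0 : 0 ≤ I := by
    rw [hI]
    exact intervalIntegral.integral_nonneg hT.le (fun x _ => abs_nonneg _)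
  have hE1 : 1 ≤ E := Real.one_le_exp hI0
  have hE0 : 0 < E := lt_of_lt_of_le one_pos hE1
  have hArat : ∀ s ∈ Set.Icc (0:ℝ) T, ∀ t ∈ Set.Icc (0:ℝ) T, (A t)⁻¹ * A s ≤ E := by
    intro s hs t ht
    rw [hA s, hA t, ← Real.exp_neg, ← Real.exp_add, hE]
    exact Real.exp_le_exp.2 (by linarith [hratio s hs t ht])
  have hAle : ∀ t ∈ Set.Icc (0:ℝ) T, A t ≤ E := by
    intro t ht
    have := hArat t ht 0 ⟨le_rfl, hT.le⟩
    rwa [hA0, inv_one, one_mul] at this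
  have hAcont : ContinuousOn A (Set.Icc 0 T) := by
    have hAeq : A = fun t => Real.exp (F t) := funext hA
    rw [hAeq]
    exact Real.continuous_exp.comp_continuousOn hFc
  have hAd : ∀ t ∈ Set.Ioo (0:ℝ) T, HasDerivAt A (α t * A t) t := by
    intro t ht
    have hAeq : A = fun s => Real.exp (F s) := funext hA
    rw [hAeq]
    have := (hFd t ht).exp
    simpa [mul_comm] using this
  -- boundary bounds
  have hB1bdd : BddAbove (Set.range fun y : Set.Ioi (0:ℝ) => |u ↑y 0|) :=
    ⟨M, by rintro _ ⟨y, rfl⟩; exact hM y (Set.mem_Ici.mpr (le_of_lt y.2)) 0 ⟨le_rfl, hT.le⟩⟩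
  have hB1 : ∀ x > (0:ℝ), |u x 0| ≤ B1 := fun x hx =>
    le_ciSup hB1bdd (⟨x, hx⟩ : Set.Ioi (0:ℝ))
  have hB2bdd : BddAbove (Set.range fun s : Set.Ioo (0:ℝ) T => |u 0 ↑s|) :=
    ⟨M, by rintro _ ⟨s, rfl⟩; exact hM 0 (Set.mem_Ici.mpr le_rfl) s ⟨s.2.1.le, s.2.2.le⟩⟩
  have hB2 : ∀ t ∈ Set.Ioo (0:ℝ) T, |u 0 t| ≤ B2 := fun t ht =>
    le_ciSup hB2bdd (⟨t, ht⟩ : Set.Ioo (0:ℝ) T)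
  have hB1nn : 0 ≤ B1 := le_trans (abs_nonneg _) (hB1 1 one_pos)
  have hB2nn : 0 ≤ B2 :=
    le_trans (abs_nonneg _) (hB2 (T/2) ⟨by linarith, by linarith⟩)
  -- extend B2 bound to t = 0 by continuity
  have hB2' : ∀ t ∈ Set.Icc (0:ℝ) t₀, |u 0 t| ≤ B2 := by
    intro t ht
    rcases ht.1.eq_or_lt with rfl | hpos
    · -- t = 0 : limit from the right
      have hc0 : ContinuousWithinAt (fun s : ℝ => |u 0 s|) (Set.Ioo 0 T) 0 := by
        have hc1 : ContinuousOn (fun s : ℝ => u 0 s) (Set.Icc 0 T) := by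
          have : ContinuousOn (fun s : ℝ => ((0 : ℝ), s)) (Set.Icc 0 T) :=
            (continuous_const.prodMk continuous_id).continuousOn
          exact huc.comp this (fun s hs => ⟨Set.mem_Ici.mpr le_rfl, hs⟩)
        exact ((continuous_abs.comp_continuousOn hc1).continuousWithinAt
          ⟨le_rfl, hT.le⟩).mono Set.Ioo_subset_Icc_self
      have hne : 𝓝[Set.Ioo (0:ℝ) T] 0 ≠ ⊥ := by
        rw [← neBot_iff]
        apply mem_closure_iff_nhdsWithin_neBot.mp
        rw [closure_Ioo (ne_of_lt hT)]
        exact ⟨le_rfl, hT.le⟩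
      have : NeBot (𝓝[Set.Ioo (0:ℝ) T] (0:ℝ)) := neBot_iff.mpr hne
      refine le_of_tendsto hc0 ?_
      filter_upwards [self_mem_nhdsWithin] with s hs using hB2 s hs
    · exact hB2 t ⟨hpos, lt_of_le_of_lt ht.2 ht₀.2⟩
  -- the key one-sided estimate
  have key : ∀ σ : ℝ, |σ| = 1 → σ * u x₀ t₀ ≤ E * (B1 + B2) := by
    intro σ hσ
    apply le_of_forall_pos_le_add
    intro c hc
    set δ : ℝ := c * A t₀ / (2 * T) with hδdef
    have hδ : 0 < δ := by
      apply div_pos (mul_pos hc (hApos t₀)) (by linarith)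
    set η : ℝ := min (δ / (2 * (M + 1)))
      (min ((c * A t₀) / (2 * (x₀ + 1))) (E * (M + 1) / (x₀ + 1))) with hηdef
    have hM1 : (0:ℝ) < M + 1 := by linarith
    have hx₁ : (0:ℝ) < x₀ + 1 := by linarith
    have hη : 0 < η := by
      refine lt_min (div_pos hδ (by linarith)) (lt_min ?_ ?_)
      · exact div_pos (mul_pos hc (hApos t₀)) (by linarith)
      · exact div_pos (mul_pos hE0 hM1) hx₁
    set X : ℝ := E * (M + 1) / η with hXdef
    have hX0 : 0 < X := by positivity
    have hηX : η * X = E * (M + 1) := by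
      rw [hXdef]; field_simp
    have hXx₀ : x₀ + 1 ≤ X := by
      have h1 : η ≤ E * (M + 1) / (x₀ + 1) :=
        le_trans (min_le_right _ _) (min_le_right _ _)
      rw [hXdef, le_div_iff₀ hη]
      rw [le_div_iff₀ (by linarith : (0:ℝ) < x₀ + 1)] at h1
      linarith [h1]
    have hηM : η * M < δ := by
      have h1 : η ≤ δ / (2 * (M + 1)) := min_le_left _ _
      have h2 : η * M ≤ δ / (2 * (M + 1)) * M :=
        mul_le_mul_of_nonneg_right h1 hM0
      have h3 : δ / (2 * (M + 1)) * M < δ := by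
        rw [div_mul_eq_mul_div, div_lt_iff₀ (by linarith : (0:ℝ) < 2 * (M + 1))]
        have h4 : 0 ≤ δ * M := mul_nonneg hδ.le hM0
        nlinarith [h4, hδ]
      linarith
    -- the comparison function
    set w : ℝ × ℝ → ℝ := fun z => σ * (A z.2 * u z.1 z.2) - δ * z.2 - η * z.1 with hwdef
    set K : Set (ℝ × ℝ) := Set.Icc 0 X ×ˢ Set.Icc 0 t₀ with hKdef
    have hKsub : K ⊆ Set.Ici 0 ×ˢ Set.Icc 0 T := fun z hz =>
      ⟨hz.1.1, hz.2.1, le_trans hz.2.2 ht₀.2.le⟩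
    have hKc : IsCompact K := isCompact_Icc.prod isCompact_Icc
    have hKne : K.Nonempty := ⟨(0, 0), ⟨⟨le_rfl, hX0.le⟩, le_rfl, ht₀.1.le⟩⟩
    have hwc : ContinuousOn w K := by
      have h1 : ContinuousOn (fun z : ℝ × ℝ => A z.2) K := by
        apply (hAcont.mono (Set.Icc_subset_Icc le_rfl ht₀.2.le)).comp
          continuous_snd.continuousOn
        exact fun z hz => hz.2
      have h2 : ContinuousOn (fun z : ℝ × ℝ => u z.1 z.2) K := huc.mono hKsub
      exact ((continuousOn_const.mul (h1.mul h2)).sub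
        (continuousOn_const.mul continuous_snd.continuousOn)).sub
        (continuousOn_const.mul continuous_fst.continuousOn)
    obtain ⟨z, hzK, hzmax⟩ := hKc.exists_isMaxOn hKne hwc
    have hzx : z.1 ∈ Set.Icc 0 X := hzK.1
    have hzt : z.2 ∈ Set.Icc 0 t₀ := hzK.2
    have hx₀K : (x₀, t₀) ∈ K :=
      ⟨⟨hx₀'.le, by linarith [hXx₀]⟩, ⟨ht₀.1.le, le_rfl⟩⟩
    have hwx₀ : w (x₀, t₀) ≤ w z := hzmax hx₀K
    -- bound on w z
    have hztT : z.2 ∈ Set.Icc (0:ℝ) T := ⟨hzt.1, le_trans hzt.2 ht₀.2.le⟩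
    have hwzb : w z ≤ A z.2 * (B1 + B2) := by
      have hsv : ∀ v : ℝ, σ * (A z.2 * v) ≤ A z.2 * |v| := by
        intro v
        calc σ * (A z.2 * v) ≤ |σ * (A z.2 * v)| := le_abs_self _
          _ = A z.2 * |v| := by
              rw [abs_mul, hσ, one_mul, abs_mul, abs_of_pos (hApos z.2)]
      rcases hzx.1.eq_or_lt with hx1 | hx1
      · -- left boundary x = 0
        have hb : |u z.1 z.2| ≤ B2 := by rw [← hx1]; exact hB2' z.2 hzt
        have : w z ≤ σ * (A z.2 * u z.1 z.2) := by
          rw [hwdef]; simp only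
          linarith [mul_nonneg hδ.le hzt.1, mul_nonneg hη.le (hx1 ▸ le_rfl : (0:ℝ) ≤ z.1)]
        calc w z ≤ σ * (A z.2 * u z.1 z.2) := this
          _ ≤ A z.2 * |u z.1 z.2| := hsv _
          _ ≤ A z.2 * B2 := mul_le_mul_of_nonneg_left hb (hApos z.2).le
          _ ≤ A z.2 * (B1 + B2) := by
              have := mul_nonneg (hApos z.2).le hB1nn
              linarith
      · rcases hzt.1.eq_or_lt with ht1 | ht1
        · -- bottom boundary t = 0
          have hb : |u z.1 z.2| ≤ B1 := by rw [← ht1]; exact hB1 z.1 hx1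
          have hA1 : A z.2 = 1 := by rw [← ht1]; exact hA0
          have : w z ≤ σ * (A z.2 * u z.1 z.2) := by
            rw [hwdef]; simp only
            linarith [mul_nonneg hδ.le hzt.1, mul_nonneg hη.le hzx.1]
          calc w z ≤ σ * (A z.2 * u z.1 z.2) := this
            _ ≤ A z.2 * |u z.1 z.2| := hsv _
            _ ≤ A z.2 * B1 := mul_le_mul_of_nonneg_left hb (hApos z.2).le
            _ ≤ A z.2 * (B1 + B2) := by
                have := mul_nonneg (hApos z.2).le hB2nn
                linarith
        · rcases hzx.2.eq_or_lt with hxX | hxX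
          · -- right boundary x = X
            have hb : |u z.1 z.2| ≤ M := hM z.1 hx1.le z.2 hztT
            have h1 : σ * (A z.2 * u z.1 z.2) ≤ E * M := by
              calc σ * (A z.2 * u z.1 z.2) ≤ A z.2 * |u z.1 z.2| := hsv _
                _ ≤ E * M := mul_le_mul (hAle z.2 hztT) hb (abs_nonneg _) hE0.le
            have hX1 : η * z.1 = η * X := by rw [hxX]
            have : w z ≤ E * M - η * X := by
              rw [hwdef]; simp only
              linarith [h1, hX1, mul_nonneg hδ.le hzt.1]
            calc w z ≤ E * M - η * X := this
              _ = -E := by rw [hηX]; ring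
              _ ≤ 0 := by linarith
              _ ≤ A z.2 * (B1 + B2) :=
                  mul_nonneg (hApos z.2).le (by linarith)
          · -- interior point: contradiction
            exfalso
            have hzT : z.2 ∈ Set.Ioo (0:ℝ) T := ⟨ht1, lt_of_le_of_lt hzt.2 ht₀.2⟩
            have hzI : z.1 ∈ Set.Ioi (0:ℝ) := hx1
            set uu := u z.1 z.2 with huu
            set ux := deriv (fun y => u y z.2) z.1 with hux'
            set uxx := deriv (fun y => deriv (fun y' => u y' z.2) y) z.1 with huxx'
            set ut := deriv (fun s => u z.1 s) z.2 with hut'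
            -- x-slice
            set f : ℝ → ℝ := fun y => w (y, z.2) with hfdef
            have hfd : ∀ y ∈ Set.Ioo (0:ℝ) X, DifferentiableAt ℝ f y := by
              intro y hy
              have h1 : DifferentiableAt ℝ (fun y' => u y' z.2) y := hux y hy.1 z.2 hzT
              exact (((h1.const_mul (A z.2)).const_mul σ).sub
                (differentiableAt_const (δ * z.2))).sub (differentiableAt_id.const_mul η)
            have hderivf : ∀ y ∈ Set.Ioo (0:ℝ) X,
                deriv f y = σ * (A z.2 * deriv (fun y' => u y' z.2) y) - η := by
              intro y hy
              have h1 := (hux y hy.1 z.2 hzT).hasDerivAt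
              have h2 := ((h1.const_mul (A z.2)).const_mul σ).sub_const (δ * z.2)
              have h3 := h2.sub ((hasDerivAt_id y).const_mul η)
              have h4 : HasDerivAt f (σ * (A z.2 * deriv (fun y' => u y' z.2) y) - η) y := by
                simp only [mul_one] at h3; exact h3
              exact h4.deriv
            have hmaxf : ∀ y ∈ Set.Ioo (0:ℝ) X, f y ≤ f z.1 := by
              intro y hy
              exact hzmax ⟨⟨hy.1.le, hy.2.le⟩, hzt⟩
            have hd2 : DifferentiableAt ℝ (deriv f) z.1 ∧
                deriv (deriv f) z.1 = σ * (A z.2 * uxx) := by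
              have hev : deriv f =ᶠ[𝓝 z.1]
                  (fun y => σ * (A z.2 * deriv (fun y' => u y' z.2) y) - η) := by
                filter_upwards [isOpen_Ioo.mem_nhds (⟨hx1, hxX⟩ : z.1 ∈ Set.Ioo 0 X)]
                  with y hy using hderivf y hy
              have hg1 : DifferentiableAt ℝ
                  (fun y => σ * (A z.2 * deriv (fun y' => u y' z.2) y) - η) z.1 :=
                (((huxx z.1 hzI z.2 hzT).const_mul (A z.2)).const_mul σ).sub
                  (differentiableAt_const η)
              have hg2 : HasDerivAt
                  (fun y => σ * (A z.2 * deriv (fun y' => u y' z.2) y) - η)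
                  (σ * (A z.2 * uxx)) z.1 := by
                have := (((huxx z.1 hzI z.2 hzT).hasDerivAt.const_mul
                  (A z.2)).const_mul σ).sub_const η
                convert this using 1
              constructor
              · exact hg1.congr_of_eventuallyEq hev
              · rw [Filter.EventuallyEq.deriv_eq hev]
                exact hg2.deriv
            obtain ⟨hfz, hf2⟩ := aux_second_deriv_nonpos (⟨hx1, hxX⟩ : z.1 ∈ Set.Ioo 0 X)
              hfd hd2.1 hmaxf
            have hxslope : σ * (A z.2 * ux) = η := by
              have := hderivf z.1 ⟨hx1, hxX⟩
              rw [hfz] at this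
              linarith [this]
            have hxcurv : σ * (A z.2 * uxx) ≤ 0 := by rw [← hd2.2]; exact hf2
            -- t-slice
            set g : ℝ → ℝ := fun s => w (z.1, s) with hgdef
            have hgd : HasDerivAt g
                (σ * (α z.2 * A z.2 * uu + A z.2 * ut) - δ * 1) z.2 := by
              have h1 := (hAd z.2 hzT).mul (hut z.1 hzI z.2 hzT).hasDerivAt
              have h2 := (h1.const_mul σ).sub ((hasDerivAt_id z.2).const_mul δ)
              have h3 := h2.sub_const (η * z.1)
              exact h3
            have hmaxg : ∀ s ∈ Set.Icc (0:ℝ) z.2, g s ≤ g z.2 := by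
              intro s hs
              exact hzmax ⟨hzx, ⟨hs.1, le_trans hs.2 hzt.2⟩⟩
            have htslope : δ ≤ σ * (α z.2 * A z.2 * uu + A z.2 * ut) := by
              have := aux_deriv_nonneg ht1 hgd hmaxg
              linarith
            -- the PDE
            have hpde := heq z.1 hzI z.2 hzT
            rw [← hux', ← huxx', ← hut', ← huu] at hpde
            have hAne : A z.2 ≠ 0 := (hApos z.2).ne'
            have e3 : σ * (α z.2 * A z.2 * uu + A z.2 * ut)
                = ε * (σ * uxx) - uu * η := by
              calc σ * (α z.2 * A z.2 * uu + A z.2 * ut)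
                  = σ * A z.2 * (ut + uu * ux + α z.2 * uu)
                    - uu * (σ * (A z.2 * ux)) := by ring
                _ = σ * A z.2 * (ε * (A z.2)⁻¹ * uxx) - uu * η := by rw [hpde, hxslope]
                _ = ε * (σ * uxx) - uu * η := by field_simp
            have hσuxx : σ * uxx ≤ 0 := by
              have h1 : σ * uxx = (σ * (A z.2 * uxx)) * (A z.2)⁻¹ := by field_simp
              rw [h1]
              exact mul_nonpos_iff.mpr (Or.inr ⟨hxcurv, (inv_nonneg.2 (hApos z.2).le)⟩)
            have huubd : |uu| ≤ M := hM z.1 hx1.le z.2 hztT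
            have h5 : -uu * η ≤ M * η := by
              have : -uu ≤ M := by
                have := abs_le.mp huubd
                linarith [this.1]
              exact mul_le_mul_of_nonneg_right this hη.le
            have h6 : ε * (σ * uxx) ≤ 0 :=
              mul_nonpos_iff.mpr (Or.inl ⟨hε.le, hσuxx⟩)
            linarith [htslope, e3, h5, h6, hηM]
    -- conclude
    have hq : A t₀ * (σ * u x₀ t₀) = w (x₀, t₀) + δ * t₀ + η * x₀ := by
      rw [hwdef]; simp only; ring
    have hAt₀pos := hApos t₀
    have hAt₀inv : 0 < (A t₀)⁻¹ := inv_pos.2 hAt₀pos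
    have hstep1 : A t₀ * (σ * u x₀ t₀) ≤ A z.2 * (B1 + B2) + (δ * t₀ + η * x₀) := by
      rw [hq]; linarith [hwx₀, hwzb]
    have hsmall : δ * t₀ + η * x₀ ≤ c * A t₀ := by
      have hδT : δ * T = c * A t₀ / 2 := by
        rw [hδdef]; field_simp
      have h1 : δ * t₀ ≤ c * A t₀ / 2 := by
        have : δ * t₀ ≤ δ * T := mul_le_mul_of_nonneg_left ht₀.2.le hδ.le
        linarith
      have h2 : η * x₀ ≤ c * A t₀ / 2 := by
        have hη2 : η ≤ c * A t₀ / (2 * (x₀ + 1)) :=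
          le_trans (min_le_right _ _) (min_le_left _ _)
        calc η * x₀ ≤ η * (x₀ + 1) := by linarith [hη.le]
          _ ≤ c * A t₀ / (2 * (x₀ + 1)) * (x₀ + 1) :=
              mul_le_mul_of_nonneg_right hη2 (by linarith)
          _ = c * A t₀ / 2 := by field_simp
      linarith
    have hfinal : σ * u x₀ t₀ ≤ ((A t₀)⁻¹ * A z.2) * (B1 + B2) + c := by
      have h0 : σ * u x₀ t₀ = (A t₀)⁻¹ * (A t₀ * (σ * u x₀ t₀)) := by
        field_simp
      rw [h0]
      calc (A t₀)⁻¹ * (A t₀ * (σ * u x₀ t₀))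
          ≤ (A t₀)⁻¹ * (A z.2 * (B1 + B2) + (δ * t₀ + η * x₀)) :=
            mul_le_mul_of_nonneg_left hstep1 hAt₀inv.le
        _ = ((A t₀)⁻¹ * A z.2) * (B1 + B2) + (A t₀)⁻¹ * (δ * t₀ + η * x₀) := by ring
        _ ≤ ((A t₀)⁻¹ * A z.2) * (B1 + B2) + c := by
            have := mul_le_mul_of_nonneg_left hsmall hAt₀inv.le
            rw [show (A t₀)⁻¹ * (c * A t₀) = c by field_simp] at this
            linarith
    have hrat := hArat z.2 hztT t₀ ⟨ht₀.1.le, ht₀.2.le⟩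
    calc σ * u x₀ t₀ ≤ ((A t₀)⁻¹ * A z.2) * (B1 + B2) + c := hfinal
      _ ≤ E * (B1 + B2) + c := by
          have := mul_le_mul_of_nonneg_right hrat (by linarith : (0:ℝ) ≤ B1 + B2)
          linarith
  have k1 := key 1 (by norm_num)
  have k2 := key (-1) (by norm_num)
  rw [one_mul] at k1
  rw [neg_one_mul] at k2
  exact abs_le.mpr ⟨by linarith, k1⟩
end

section
/- Let α : [0,∞) → ℝ be continuous; set A(t) := exp(∫₀ᵗ α(s) ds), τ(t) := ∫₀ᵗ A(s)⁻¹ ds and T* := ∫₀^∞ A(s)⁻¹ ds ∈ (0,∞]. Let p, q : (0,∞)×(0,T*) → ℝ be continuously differentiable, and define u(x,t) := A(t)⁻¹ p(x, τ(t)) and v(x,t) := q(x, τ(t)) for x > 0, t > 0. Then (p,q) is a classical solution of ∂_τ p + ∂_x(p²/2) = 0 and ∂_τ q + ∂_x(p q) = 0 on (0,∞)×(0,T*) if and only if (u,v) is a classical solution of ∂_t u + ∂_x(u²/2) + α(t) u = 0 and ∂_t v + ∂_x(u v) = 0 on (0,∞)×(0,∞). -/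
open MeasureTheory Set Filter Topology
open scoped ENNReal

/-- Proposition 3.1: with `A(t) = exp(∫₀ᵗ α)`, `τ(t) = ∫₀ᵗ A⁻¹`,
`T* = ∫₀^∞ A⁻¹ ∈ (0,∞]`, and `u(x,t) = A(t)⁻¹ p(x,τ(t))`, `v(x,t) = q(x,τ(t))`,
the pair `(p,q)` is a classical solution of `p_τ + (p²/2)_x = 0`, `q_τ + (pq)_x = 0`
on `(0,∞)×(0,T*)` iff `(u,v)` is a classical solution of
`u_t + (u²/2)_x + α(t)u = 0`, `v_t + (uv)_x = 0` on `(0,∞)×(0,∞)`. -/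
theorem change_of_variables_inviscid
    (α : ℝ → ℝ) (hα : Continuous α)
    (A : ℝ → ℝ) (hA : ∀ t, A t = Real.exp (∫ s in (0:ℝ)..t, α s))
    (τ : ℝ → ℝ) (hτ : ∀ t, τ t = ∫ s in (0:ℝ)..t, (A s)⁻¹)
    (Tstar : ℝ≥0∞) (hT : Tstar = ∫⁻ s in Set.Ioi (0:ℝ), ENNReal.ofReal ((A s)⁻¹))
    (p q : ℝ → ℝ → ℝ)
    (hp : ContDiffOn ℝ 1 (fun z : ℝ × ℝ => p z.1 z.2)
        {z : ℝ × ℝ | 0 < z.1 ∧ 0 < z.2 ∧ ENNReal.ofReal z.2 < Tstar})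
    (hq : ContDiffOn ℝ 1 (fun z : ℝ × ℝ => q z.1 z.2)
        {z : ℝ × ℝ | 0 < z.1 ∧ 0 < z.2 ∧ ENNReal.ofReal z.2 < Tstar})
    (u v : ℝ → ℝ → ℝ)
    (hu : ∀ x t, u x t = (A t)⁻¹ * p x (τ t))
    (hv : ∀ x t, v x t = q x (τ t)) :
    (∀ x > (0:ℝ), ∀ σ : ℝ, 0 < σ → ENNReal.ofReal σ < Tstar →
        (deriv (fun s => p x s) σ + deriv (fun y => (p y σ) ^ 2 / 2) x = 0 ∧
         deriv (fun s => q x s) σ + deriv (fun y => p y σ * q y σ) x = 0))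
    ↔
    (∀ x > (0:ℝ), ∀ t > (0:ℝ),
        (deriv (fun s => u x s) t + deriv (fun y => (u y t) ^ 2 / 2) x + α t * u x t = 0 ∧
         deriv (fun s => v x s) t + deriv (fun y => u y t * v y t) x = 0)) := by
  have hAe : A = fun t => Real.exp (∫ s in (0:ℝ)..t, α s) := funext hA
  have hτe : τ = fun t => ∫ s in (0:ℝ)..t, (A s)⁻¹ := funext hτ
  -- positivity of A and derivative of A
  have hA0 : ∀ t, 0 < A t := fun t => (hA t) ▸ Real.exp_pos _
  have hF : ∀ t, HasDerivAt (fun t => ∫ s in (0:ℝ)..t, α s) (α t) t := fun t =>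
    intervalIntegral.integral_hasDerivAt_right (hα.intervalIntegrable 0 t)
      (hα.stronglyMeasurableAtFilter _ _) hα.continuousAt
  have hAD : ∀ t, HasDerivAt A (A t * α t) t := by
    intro t
    rw [hAe]
    simpa using (hF t).exp
  have hAdiff : Differentiable ℝ A := fun t => (hAD t).differentiableAt
  have hAcont : Continuous A := hAdiff.continuous
  have hAinvcont : Continuous fun s => (A s)⁻¹ := hAcont.inv₀ fun s => (hA0 s).ne'
  -- derivative and monotonicity of τ
  have hτD : ∀ t, HasDerivAt τ ((A t)⁻¹) t := by
    intro t
    rw [hτe]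
    exact intervalIntegral.integral_hasDerivAt_right (hAinvcont.intervalIntegrable 0 t)
      (hAinvcont.stronglyMeasurableAtFilter _ _) hAinvcont.continuousAt
  have hτdiff : Differentiable ℝ τ := fun t => (hτD t).differentiableAt
  have hτcont : Continuous τ := hτdiff.continuous
  have hτ0 : τ 0 = 0 := by rw [hτ]; simp
  have hτmono : StrictMono τ := by
    apply strictMono_of_deriv_pos
    intro t
    rw [(hτD t).deriv]
    exact inv_pos.2 (hA0 t)
  have hτpos : ∀ t, 0 < t → 0 < τ t := fun t ht => hτ0 ▸ hτmono ht
  -- ofReal (τ t) as a set lintegral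
  have hofReal : ∀ t : ℝ, 0 ≤ t →
      ENNReal.ofReal (τ t) = ∫⁻ s in Set.Ioc (0:ℝ) t, ENNReal.ofReal ((A s)⁻¹) := by
    intro t ht
    rw [hτ, intervalIntegral.integral_of_le ht,
      MeasureTheory.ofReal_integral_eq_lintegral_ofReal (hAinvcont.integrableOn_Ioc)
        (Eventually.of_forall fun s => inv_nonneg.2 (hA0 s).le)]
  have hmeas : Measurable fun s => ENNReal.ofReal ((A s)⁻¹) :=
    (ENNReal.continuous_ofReal.comp hAinvcont).measurable
  have htail : ∀ t : ℝ, (0:ℝ≥0∞) < ∫⁻ s in Set.Ioi t, ENNReal.ofReal ((A s)⁻¹) := by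
    intro t
    rw [MeasureTheory.lintegral_pos_iff_support hmeas]
    have hsupp : Function.support (fun s => ENNReal.ofReal ((A s)⁻¹)) = Set.univ := by
      ext s
      simp [Function.mem_support, ne_of_gt (ENNReal.ofReal_pos.2 (inv_pos.2 (hA0 s)))]
    rw [hsupp, MeasureTheory.Measure.restrict_apply MeasurableSet.univ]
    simp [Real.volume_Ioi]
  -- τ stays below Tstar
  have hτlt : ∀ t : ℝ, 0 ≤ t → ENNReal.ofReal (τ t) < Tstar := by
    intro t ht
    rw [hT, ← Set.Ioc_union_Ioi_eq_Ioi ht,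
      MeasureTheory.lintegral_union measurableSet_Ioi (Set.Ioc_disjoint_Ioi le_rfl),
      ← hofReal t ht]
    exact ENNReal.lt_add_right ENNReal.ofReal_ne_top (htail t).ne'
  -- surjectivity of τ onto (0, Tstar)
  have hsurj : ∀ σ : ℝ, 0 < σ → ENNReal.ofReal σ < Tstar → ∃ t, 0 < t ∧ τ t = σ := by
    intro σ hσ hσT
    have hUnion : (⋃ n : ℕ, Set.Ioc (0:ℝ) (n:ℝ)) = Set.Ioi 0 :=
      Set.iUnion_Ioc_eq_Ioi_self_iff.mpr fun x _ => exists_nat_ge x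
    have h2 : ∀ s : Set ℝ, MeasurableSet s →
        (volume.withDensity (fun s => ENNReal.ofReal ((A s)⁻¹))) s
          = ∫⁻ x in s, ENNReal.ofReal ((A x)⁻¹) :=
      fun s hs => withDensity_apply _ hs
    have hmono : Monotone (fun n : ℕ => Set.Ioc (0:ℝ) (n:ℝ)) :=
      fun n m h => Set.Ioc_subset_Ioc le_rfl (Nat.cast_le.2 h)
    have hsup : Tstar = ⨆ n : ℕ, ENNReal.ofReal (τ (n:ℝ)) := by
      rw [hT, ← h2 _ measurableSet_Ioi, ← hUnion,
        Directed.measure_iUnion hmono.directed_le]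
      exact iSup_congr fun n => by
        rw [h2 _ measurableSet_Ioc, hofReal _ (Nat.cast_nonneg n)]
    rw [hsup] at hσT
    obtain ⟨n, hn⟩ := lt_iSup_iff.mp hσT
    have hσn : σ < τ (n:ℝ) := (ENNReal.ofReal_lt_ofReal_iff_of_nonneg hσ.le).mp hn
    have h0n : (0:ℝ) ≤ (n:ℝ) := Nat.cast_nonneg n
    have hmem : σ ∈ Set.Ioo (τ 0) (τ (n:ℝ)) := ⟨by rw [hτ0]; exact hσ, hσn⟩
    obtain ⟨t, htIoo, hteq⟩ := intermediate_value_Ioo h0n hτcont.continuousOn hmem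
    exact ⟨t, htIoo.1, hteq⟩
  -- the set of good points is open
  set S := {z : ℝ × ℝ | 0 < z.1 ∧ 0 < z.2 ∧ ENNReal.ofReal z.2 < Tstar} with hS
  have hSopen : IsOpen S := by
    apply IsOpen.and (isOpen_lt continuous_const continuous_fst)
    apply IsOpen.and (isOpen_lt continuous_const continuous_snd)
    exact isOpen_lt (ENNReal.continuous_ofReal.comp continuous_snd) continuous_const
  -- partial differentiability at good points
  have hdiff : ∀ x σ : ℝ, (x, σ) ∈ S →
      DifferentiableAt ℝ (fun s => p x s) σ ∧ DifferentiableAt ℝ (fun y => p y σ) x ∧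
      DifferentiableAt ℝ (fun s => q x s) σ ∧ DifferentiableAt ℝ (fun y => q y σ) x := by
    intro x σ hmem
    have hPd : DifferentiableAt ℝ (fun z : ℝ × ℝ => p z.1 z.2) (x, σ) :=
      (hp.differentiableOn one_ne_zero).differentiableAt (hSopen.mem_nhds hmem)
    have hQd : DifferentiableAt ℝ (fun z : ℝ × ℝ => q z.1 z.2) (x, σ) :=
      (hq.differentiableOn one_ne_zero).differentiableAt (hSopen.mem_nhds hmem)
    exact ⟨hPd.comp σ ((differentiableAt_const x).prodMk differentiableAt_id),
      (hPd.comp x (differentiableAt_fun_id.prodMk (differentiableAt_const σ)) :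
        DifferentiableAt ℝ ((fun z : ℝ × ℝ => p z.1 z.2) ∘ fun y : ℝ => (y, σ)) x),
      hQd.comp σ ((differentiableAt_const x).prodMk differentiableAt_id),
      (hQd.comp x (differentiableAt_fun_id.prodMk (differentiableAt_const σ)) :
        DifferentiableAt ℝ ((fun z : ℝ × ℝ => q z.1 z.2) ∘ fun y : ℝ => (y, σ)) x)⟩
  -- the key computation relating the two systems
  have key : ∀ x : ℝ, 0 < x → ∀ t : ℝ, 0 < t →
      (deriv (fun s => u x s) t + deriv (fun y => (u y t) ^ 2 / 2) x + α t * u x t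
        = ((A t)⁻¹) ^ 2 *
          (deriv (fun s => p x s) (τ t) + deriv (fun y => (p y (τ t)) ^ 2 / 2) x)) ∧
      (deriv (fun s => v x s) t + deriv (fun y => u y t * v y t) x
        = (A t)⁻¹ *
          (deriv (fun s => q x s) (τ t) + deriv (fun y => p y (τ t) * q y (τ t)) x)) := by
    intro x hx t ht
    have hmem : (x, τ t) ∈ S := ⟨hx, hτpos t ht, hτlt t ht.le⟩
    obtain ⟨hpx, hpy, hqx, hqy⟩ := hdiff x (τ t) hmem
    have hAne : A t ≠ 0 := (hA0 t).ne'
    have hAinv : HasDerivAt (fun s => (A s)⁻¹) (-(A t * α t) / (A t) ^ 2) t :=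
      (hAD t).inv hAne
    have hcomp : HasDerivAt (fun s => p x (τ s))
        (deriv (fun s => p x s) (τ t) * (A t)⁻¹) t := hpx.hasDerivAt.comp t (hτD t)
    have hueq : (fun s => u x s) = fun s => (A s)⁻¹ * p x (τ s) := funext fun s => hu x s
    have hut : deriv (fun s => u x s) t
        = -(A t * α t) / (A t) ^ 2 * p x (τ t)
          + (A t)⁻¹ * (deriv (fun s => p x s) (τ t) * (A t)⁻¹) := by
      rw [hueq]; exact (hAinv.mul hcomp).deriv
    have hux : deriv (fun y => (u y t) ^ 2 / 2) x
        = ((A t)⁻¹) ^ 2 * deriv (fun y => (p y (τ t)) ^ 2 / 2) x := by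
      have h1 : (fun y => (u y t) ^ 2 / 2)
          = fun y => ((A t)⁻¹) ^ 2 * ((p y (τ t)) ^ 2 / 2) := funext fun y => by rw [hu]; ring
      rw [h1]; exact deriv_const_mul _ ((hpy.pow 2).div_const 2)
    have hveq : (fun s => v x s) = fun s => q x (τ s) := funext fun s => hv x s
    have hvt : deriv (fun s => v x s) t = deriv (fun s => q x s) (τ t) * (A t)⁻¹ := by
      rw [hveq]; exact (hqx.hasDerivAt.comp t (hτD t)).deriv
    have hvx : deriv (fun y => u y t * v y t) x
        = (A t)⁻¹ * deriv (fun y => p y (τ t) * q y (τ t)) x := by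
      have h1 : (fun y => u y t * v y t)
          = fun y => (A t)⁻¹ * (p y (τ t) * q y (τ t)) := funext fun y => by rw [hu, hv]; ring
      rw [h1]; exact deriv_const_mul _ (hpy.mul hqy)
    constructor
    · rw [hut, hux, hu x t]; field_simp; ring
    · rw [hvt, hvx]; ring
  -- finish
  constructor
  · intro H x hx t ht
    obtain ⟨e1, e2⟩ := key x hx t ht
    obtain ⟨h1, h2⟩ := H x hx (τ t) (hτpos t ht) (hτlt t ht.le)
    exact ⟨by rw [e1, h1, mul_zero], by rw [e2, h2, mul_zero]⟩
  · intro H x hx σ hσ hσT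
    obtain ⟨t, ht, hteq⟩ := hsurj σ hσ hσT
    subst hteq
    obtain ⟨e1, e2⟩ := key x hx t ht
    obtain ⟨h1, h2⟩ := H x hx t ht
    have hAne2 : ((A t)⁻¹) ^ 2 ≠ 0 := pow_ne_zero 2 (inv_ne_zero (hA0 t).ne')
    have hAne1 : (A t)⁻¹ ≠ 0 := inv_ne_zero (hA0 t).ne'
    constructor
    · have := e1 ▸ h1
      exact (mul_eq_zero.mp this).resolve_left hAne2
    · have := e2 ▸ h2
      exact (mul_eq_zero.mp this).resolve_left hAne1
end

section
/- Let p_B : [0,∞) → ℝ be locally Lipschitz, and for x, y, τ with 0 < τ₁ ≤ τ₂ < τ set J(x,y,τ,τ₁,τ₂) := −(1/2)∫_{τ₁}^{τ₂} (max(p_B(s),0))² ds + y²/(2τ₁) + x²/(2(τ−τ₂)) and B(x,y,τ) := inf{ J(x,y,τ,τ₁,τ₂) : 0 < τ₁ ≤ τ₂ < τ }. Then: (i) for every x > 0, y > 0 and τ > 0 the infimum defining B(x,y,τ) is attained at some pair (τ₁*, τ₂*) with 0 < τ₁* ≤ τ₂* < τ; and (ii) B is locally Lipschitz continuous on (0,∞)×(0,∞)×(0,∞).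 -/
open MeasureTheory Set Filter Topology
open scoped NNReal

noncomputable def Jf (pB : ℝ → ℝ) (x y σ τ₁ τ₂ : ℝ) : ℝ :=
  -(1 / 2) * (∫ s in τ₁..τ₂, (max (pB s) 0) ^ 2) + y ^ 2 / (2 * τ₁) + x ^ 2 / (2 * (σ - τ₂))

lemma gB_contOn (pB : ℝ → ℝ)
    (hpB : ∀ T > (0:ℝ), ∃ L : ℝ≥0, LipschitzOnWith L pB (Set.Icc 0 T))
    (T : ℝ) (hT : 0 < T) :
    ContinuousOn (fun s => (max (pB s) 0) ^ 2) (Icc 0 T) := by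
  obtain ⟨L, hL⟩ := hpB T hT
  exact (hL.continuousOn.sup continuousOn_const).pow 2

lemma gB_bound (pB : ℝ → ℝ)
    (hpB : ∀ T > (0:ℝ), ∃ L : ℝ≥0, LipschitzOnWith L pB (Set.Icc 0 T))
    (T : ℝ) (hT : 0 < T) :
    ∃ C₀ : ℝ, 0 ≤ C₀ ∧ ∀ s ∈ Icc (0:ℝ) T, |(max (pB s) 0) ^ 2| ≤ C₀ := by
  obtain ⟨C₀, hC₀⟩ := isCompact_Icc.exists_bound_of_continuousOn (gB_contOn pB hpB T hT)
  have h : ∀ s ∈ Icc (0:ℝ) T, |(max (pB s) 0) ^ 2| ≤ C₀ := by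
    intro s hs; simpa [Real.norm_eq_abs] using hC₀ s hs
  exact ⟨C₀, le_trans (abs_nonneg _) (h 0 ⟨le_refl _, hT.le⟩), h⟩

lemma integ_abs_le (pB : ℝ → ℝ) (T C₀ : ℝ) (hT : 0 ≤ T) (hC₀ : 0 ≤ C₀)
    (hbd : ∀ s ∈ Icc (0:ℝ) T, |(max (pB s) 0) ^ 2| ≤ C₀)
    (a b : ℝ) (ha : a ∈ Icc (0:ℝ) T) (hb : b ∈ Icc (0:ℝ) T) :
    |∫ s in a..b, (max (pB s) 0) ^ 2| ≤ C₀ * T := by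
  have hsub : Set.uIoc a b ⊆ Icc 0 T := Set.uIoc_subset_uIcc.trans (Set.uIcc_subset_Icc ha hb)
  have h1 : ‖∫ s in a..b, (max (pB s) 0) ^ 2‖ ≤ C₀ * |b - a| :=
    intervalIntegral.norm_integral_le_of_norm_le_const (fun s hs => by
      simpa [Real.norm_eq_abs] using hbd s (hsub hs))
  rw [Real.norm_eq_abs] at h1
  refine h1.trans ?_
  have : |b - a| ≤ T := by
    rw [abs_sub_le_iff]; constructor <;> [linarith [ha.1, hb.2]; linarith [hb.1, ha.2]]
  exact mul_le_mul_of_nonneg_left this hC₀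

lemma Jf_ge (pB : ℝ → ℝ) (x y σ T C₀ τ₁ τ₂ : ℝ) (hT : 0 ≤ T) (hC₀nn : 0 ≤ C₀)
    (hbd : ∀ s ∈ Icc (0:ℝ) T, |(max (pB s) 0) ^ 2| ≤ C₀)
    (h1 : 0 < τ₁) (h12 : τ₁ ≤ τ₂) (h2σ : τ₂ < σ) (hσT : σ ≤ T) :
    -(C₀ * T) / 2 + y ^ 2 / (2 * τ₁) + x ^ 2 / (2 * (σ - τ₂)) ≤ Jf pB x y σ τ₁ τ₂ := by
  have ha : τ₁ ∈ Icc (0:ℝ) T := ⟨h1.le, by linarith⟩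
  have hb : τ₂ ∈ Icc (0:ℝ) T := ⟨le_trans h1.le h12, by linarith⟩
  have hI := integ_abs_le pB T C₀ hT hC₀nn hbd τ₁ τ₂ ha hb
  have := abs_le.mp hI
  unfold Jf
  linarith [this.2]

set_option maxHeartbeats 2000000 in
lemma exists_min (pB : ℝ → ℝ)
    (hpB : ∀ T > (0:ℝ), ∃ L : ℝ≥0, LipschitzOnWith L pB (Set.Icc 0 T))
    (x y σ : ℝ) (hx : 0 < x) (hy : 0 < y) (hσ : 0 < σ) :
    ∃ τ₁ τ₂ : ℝ, 0 < τ₁ ∧ τ₁ ≤ τ₂ ∧ τ₂ < σ ∧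
      ∀ a b : ℝ, 0 < a → a ≤ b → b < σ → Jf pB x y σ τ₁ τ₂ ≤ Jf pB x y σ a b := by
  classical
  obtain ⟨C₀, hC₀nn, hbd⟩ := gB_bound pB hpB σ hσ
  have hgc : ContinuousOn (fun s => (max (pB s) 0) ^ 2) (Icc 0 σ) := gB_contOn pB hpB σ hσ
  have hint : ∀ a b : ℝ, a ∈ Icc (0:ℝ) σ → b ∈ Icc (0:ℝ) σ →
      IntervalIntegrable (fun s => (max (pB s) 0) ^ 2) volume a b := fun a b ha hb =>
    (hgc.mono (Set.uIcc_subset_Icc ha hb)).intervalIntegrable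
  set Φ : ℝ → ℝ := fun t => ∫ s in (0:ℝ)..t, (max (pB s) 0) ^ 2 with hΦdef
  have hsplit : ∀ a b : ℝ, a ∈ Icc (0:ℝ) σ → b ∈ Icc (0:ℝ) σ →
      (∫ s in a..b, (max (pB s) 0) ^ 2) = Φ b - Φ a := by
    intro a b ha hb
    have h0 : (0:ℝ) ∈ Icc (0:ℝ) σ := ⟨le_refl _, hσ.le⟩
    have := intervalIntegral.integral_add_adjacent_intervals
      (hint 0 a h0 ha) (hint a b ha hb)
    simp only [hΦdef]; linarith
  have hΦcont : ContinuousOn Φ (Icc 0 σ) := by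
    have hlip : LipschitzOnWith C₀.toNNReal Φ (Icc 0 σ) := by
      rw [lipschitzOnWith_iff_dist_le_mul]
      intro a ha b hb
      have h1 : Φ a - Φ b = ∫ s in b..a, (max (pB s) 0) ^ 2 := by
        rw [hsplit b a hb ha]
      rw [Real.dist_eq, Real.dist_eq, h1]
      have h2 : ‖∫ s in b..a, (max (pB s) 0) ^ 2‖ ≤ C₀ * |a - b| :=
        intervalIntegral.norm_integral_le_of_norm_le_const (fun s hs => by
          have hs' : s ∈ Icc (0:ℝ) σ :=
            (Set.uIoc_subset_uIcc.trans (Set.uIcc_subset_Icc hb ha)) hs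
          rw [Real.norm_eq_abs]
          exact hbd s hs')
      rw [Real.norm_eq_abs] at h2
      simpa [Real.coe_toNNReal _ hC₀nn] using h2
    exact hlip.continuousOn
  -- constants
  have hCnn : 0 ≤ C₀ * σ := mul_nonneg hC₀nn hσ.le
  set Mv : ℝ := y ^ 2 / σ + x ^ 2 / σ with hMdef
  have hMpos : 0 < Mv := by positivity
  set D : ℝ := Mv + C₀ * σ / 2 with hDdef
  have hDpos : 0 < D := by positivity
  set ε : ℝ := min (σ / 2) (min (y ^ 2 / (2 * D)) (x ^ 2 / (2 * D))) with hεdef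
  have hεpos : 0 < ε := by positivity
  have hεσ : ε ≤ σ / 2 := min_le_left _ _
  have hεy : ε ≤ y ^ 2 / (2 * D) := le_trans (min_le_right _ _) (min_le_left _ _)
  have hεx : ε ≤ x ^ 2 / (2 * D) := le_trans (min_le_right _ _) (min_le_right _ _)
  clear_value Mv D ε
  -- value at the test point
  have hMval : Jf pB x y σ (σ / 2) (σ / 2) = Mv := by
    unfold Jf
    rw [intervalIntegral.integral_same]
    have h2 : 2 * (σ / 2) = σ := by ring
    have h3 : 2 * (σ - σ / 2) = σ := by ring
    rw [h2, h3, hMdef]; ring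
  -- the compact set
  set K : Set (ℝ × ℝ) := (Icc ε (σ - ε) ×ˢ Icc ε (σ - ε)) ∩ {p : ℝ × ℝ | p.1 ≤ p.2} with hKdef
  have hKc : IsCompact K :=
    (isCompact_Icc.prod isCompact_Icc).inter_right (isClosed_le continuous_fst continuous_snd)
  have hmidK : ((σ / 2, σ / 2) : ℝ × ℝ) ∈ K := by
    have hmem : ((σ / 2, σ / 2) : ℝ × ℝ) ∈ {p : ℝ × ℝ | p.1 ≤ p.2} := by
      simp only [Set.mem_setOf_eq]
      exact le_rfl
    exact ⟨⟨⟨hεσ, by linarith⟩, ⟨hεσ, by linarith⟩⟩, hmem⟩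
  have hKne : K.Nonempty := ⟨_, hmidK⟩
  have hK1 : ∀ p : ℝ × ℝ, p ∈ K → p.1 ∈ Icc (0:ℝ) σ := by
    intro p hp
    obtain ⟨⟨h1, _⟩, _⟩ := hp
    exact ⟨le_trans hεpos.le h1.1, by linarith [h1.2]⟩
  have hK2 : ∀ p : ℝ × ℝ, p ∈ K → p.2 ∈ Icc (0:ℝ) σ := by
    intro p hp
    obtain ⟨⟨_, h2⟩, _⟩ := hp
    exact ⟨le_trans hεpos.le h2.1, by linarith [h2.2]⟩
  -- continuity of J on K
  have hFcont : ContinuousOn (fun p : ℝ × ℝ => Jf pB x y σ p.1 p.2) K := by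
    have c1 : ContinuousOn (fun p : ℝ × ℝ => Φ p.1) K :=
      hΦcont.comp continuous_fst.continuousOn hK1
    have c2 : ContinuousOn (fun p : ℝ × ℝ => Φ p.2) K :=
      hΦcont.comp continuous_snd.continuousOn hK2
    have c3 : ContinuousOn (fun p : ℝ × ℝ => y ^ 2 / (2 * p.1)) K := by
      apply ContinuousOn.div continuousOn_const
        (continuous_const.mul continuous_fst).continuousOn
      intro p hp
      obtain ⟨⟨h1, _⟩, _⟩ := hp
      have : (0:ℝ) < p.1 := lt_of_lt_of_le hεpos h1.1
      exact mul_ne_zero two_ne_zero this.ne'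
    have c4 : ContinuousOn (fun p : ℝ × ℝ => x ^ 2 / (2 * (σ - p.2))) K := by
      apply ContinuousOn.div continuousOn_const
        (continuous_const.mul (continuous_const.sub continuous_snd)).continuousOn
      intro p hp
      obtain ⟨⟨_, h2⟩, _⟩ := hp
      have : (0:ℝ) < σ - p.2 := by have := h2.2; linarith [hεpos]
      exact mul_ne_zero two_ne_zero this.ne'
    have cF : ContinuousOn
        (fun p : ℝ × ℝ => -(1 / 2) * (Φ p.2 - Φ p.1) + y ^ 2 / (2 * p.1)
          + x ^ 2 / (2 * (σ - p.2))) K :=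
      ((continuousOn_const.mul (c2.sub c1)).add c3).add c4
    apply cF.congr
    intro p hp
    show Jf pB x y σ p.1 p.2
      = -(1 / 2) * (Φ p.2 - Φ p.1) + y ^ 2 / (2 * p.1) + x ^ 2 / (2 * (σ - p.2))
    unfold Jf
    rw [hsplit p.1 p.2 (hK1 p hp) (hK2 p hp)]
  obtain ⟨p, hpK, hpmin'⟩ := hKc.exists_isMinOn hKne hFcont
  have hpmin : ∀ a' b' : ℝ, (a', b') ∈ K → Jf pB x y σ p.1 p.2 ≤ Jf pB x y σ a' b' :=
    fun a' b' hq => isMinOn_iff.mp hpmin' (a', b') hq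
  obtain ⟨⟨hp1, hp2⟩, hple⟩ := hpK
  refine ⟨p.1, p.2, lt_of_lt_of_le hεpos hp1.1, hple, by linarith [hp2.2, hεpos], ?_⟩
  intro a b ha hab hbσ
  have hpmid : Jf pB x y σ p.1 p.2 ≤ Mv := by
    have := hpmin (σ / 2) (σ / 2) hmidK
    rwa [hMval] at this
  by_cases hK : (a, b) ∈ K
  · exact hpmin a b hK
  -- off the compact set: the value is > Mv
  have houtside : Mv < Jf pB x y σ a b := by
    have hlow := Jf_ge pB x y σ σ C₀ a b hσ.le hC₀nn hbd ha hab hbσ (le_refl _)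
    have hxterm : 0 ≤ x ^ 2 / (2 * (σ - b)) := by
      have : (0:ℝ) < σ - b := by linarith
      positivity
    have hyterm : 0 ≤ y ^ 2 / (2 * a) := by positivity
    have hcase : a < ε ∨ σ - ε < b := by
      by_contra hcon
      push_neg at hcon
      exact hK ⟨⟨⟨hcon.1, by linarith⟩, ⟨le_trans hcon.1 hab, hcon.2⟩⟩, hab⟩
    rcases hcase with hc | hc
    · have haε : a < y ^ 2 / (2 * D) := lt_of_lt_of_le hc hεy
      have hbig : D < y ^ 2 / (2 * a) := by
        rw [lt_div_iff₀ (by positivity)]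
        rw [lt_div_iff₀ (by positivity)] at haε
        nlinarith
      have hD2 : Mv + C₀ * σ / 2 < y ^ 2 / (2 * a) := by rw [← hDdef]; exact hbig
      linarith
    · have hbε : σ - b < x ^ 2 / (2 * D) := lt_of_lt_of_le (by linarith) hεx
      have hbig : D < x ^ 2 / (2 * (σ - b)) := by
        have hσb : (0:ℝ) < σ - b := by linarith
        rw [lt_div_iff₀ (by positivity)]
        rw [lt_div_iff₀ (by positivity)] at hbε
        nlinarith
      have hD2 : Mv + C₀ * σ / 2 < x ^ 2 / (2 * (σ - b)) := by rw [← hDdef]; exact hbig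
      linarith
  linarith

lemma Jf_test_eq (pB : ℝ → ℝ) (x y σ t : ℝ) :
    Jf pB x y σ t t = y ^ 2 / (2 * t) + x ^ 2 / (2 * (σ - t)) := by
  unfold Jf
  rw [intervalIntegral.integral_same]
  ring

lemma sq_le_c (u c : ℝ) (h0 : 0 ≤ u) (h : u ≤ 2 * c) : u ^ 2 ≤ 4 * c ^ 2 := by nlinarith

lemma sq_sub_le (u v c d : ℝ) (hd : |v - u| ≤ d) (hu0 : 0 ≤ u) (hv0 : 0 ≤ v)
    (hu : u ≤ c) (hv : v ≤ c) : v ^ 2 - u ^ 2 ≤ 2 * c * d := by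
  have h := abs_le.mp hd
  have hd0 : 0 ≤ d := le_trans (abs_nonneg _) hd
  nlinarith [mul_nonneg (sub_nonneg.mpr h.2) (by linarith : (0:ℝ) ≤ v + u),
    mul_nonneg hd0 (by linarith : (0:ℝ) ≤ 2 * c - (v + u))]

lemma mul_abs_le (u c t d : ℝ) (hu0 : 0 ≤ u) (huc : u ≤ c) (htd : |t| ≤ d) :
    u * t ≤ c * d := by
  have h := abs_le.mp htd
  have hd0 : 0 ≤ d := le_trans (abs_nonneg _) htd
  calc u * t ≤ u * d := mul_le_mul_of_nonneg_left h.2 hu0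
    _ ≤ c * d := mul_le_mul_of_nonneg_right huc hd0

lemma aux_lb (y a D c : ℝ) (hD : 0 < D) (ha : 0 < a) (hc : 0 < c) (hy : c / 2 ≤ y)
    (h : y ^ 2 / (2 * a) ≤ D) : c ^ 2 / (8 * D) ≤ a := by
  rw [div_le_iff₀ (by positivity)] at h
  rw [div_le_iff₀ (by positivity)]
  nlinarith

lemma prod_lb (e A A' : ℝ) (he : 0 < e) (h1 : e / 2 ≤ A') (h2 : e ≤ A) :
    2 * (e / 2) * e ≤ 2 * A' * A := by nlinarith


set_option maxHeartbeats 1000000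

/-- Properties of the boundary action functional used in Theorem 3.2: the infimum
`B(x,y,τ) = inf { J(x,y,τ,τ₁,τ₂) : 0 < τ₁ ≤ τ₂ < τ }` is attained, and `B` is
locally Lipschitz on `(0,∞)×(0,∞)×(0,∞)`. -/
theorem boundary_action_functional
    (pB : ℝ → ℝ)
    (hpB : ∀ T > (0:ℝ), ∃ L : ℝ≥0, LipschitzOnWith L pB (Set.Icc 0 T))
    (J : ℝ → ℝ → ℝ → ℝ → ℝ → ℝ)
    (hJ : ∀ x y σ τ₁ τ₂, J x y σ τ₁ τ₂ =
      -(1 / 2) * (∫ s in τ₁..τ₂, (max (pB s) 0) ^ 2)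
        + y ^ 2 / (2 * τ₁) + x ^ 2 / (2 * (σ - τ₂)))
    (B : ℝ → ℝ → ℝ → ℝ)
    (hB : ∀ x y σ, B x y σ =
      sInf {z : ℝ | ∃ τ₁ τ₂, 0 < τ₁ ∧ τ₁ ≤ τ₂ ∧ τ₂ < σ ∧ z = J x y σ τ₁ τ₂}) :
    -- (i) the infimum defining B is attained
    (∀ x > (0:ℝ), ∀ y > (0:ℝ), ∀ σ > (0:ℝ),
      ∃ τ₁ τ₂ : ℝ, 0 < τ₁ ∧ τ₁ ≤ τ₂ ∧ τ₂ < σ ∧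
        (∀ τ₁' τ₂' : ℝ, 0 < τ₁' → τ₁' ≤ τ₂' → τ₂' < σ →
          J x y σ τ₁ τ₂ ≤ J x y σ τ₁' τ₂') ∧
        B x y σ = J x y σ τ₁ τ₂) ∧
    -- (ii) B is locally Lipschitz on (0,∞)×(0,∞)×(0,∞)
    (∀ z ∈ Set.Ioi (0:ℝ) ×ˢ (Set.Ioi (0:ℝ) ×ˢ Set.Ioi (0:ℝ)),
      ∃ L : ℝ≥0, ∃ U ∈ nhdsWithin z (Set.Ioi (0:ℝ) ×ˢ (Set.Ioi (0:ℝ) ×ˢ Set.Ioi (0:ℝ))),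
        LipschitzOnWith L (fun w : ℝ × ℝ × ℝ => B w.1 w.2.1 w.2.2) U) := by

  have hJf : ∀ x y σ a b : ℝ, J x y σ a b = Jf pB x y σ a b := by
    intro x y σ a b; rw [hJ]; rfl
  -- the combined minimization fact
  have hmain : ∀ x y σ : ℝ, 0 < x → 0 < y → 0 < σ →
      ∃ a b : ℝ, 0 < a ∧ a ≤ b ∧ b < σ ∧
        (∀ a' b' : ℝ, 0 < a' → a' ≤ b' → b' < σ →
          Jf pB x y σ a b ≤ Jf pB x y σ a' b') ∧
        B x y σ = Jf pB x y σ a b ∧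
        (∀ a' b' : ℝ, 0 < a' → a' ≤ b' → b' < σ →
          B x y σ ≤ Jf pB x y σ a' b') := by
    intro x y σ hx hy hσ
    obtain ⟨a, b, h1, h2, h3, hglob⟩ := exists_min pB hpB x y σ hx hy hσ
    have hBS : B x y σ =
        sInf {z : ℝ | ∃ τ₁ τ₂, 0 < τ₁ ∧ τ₁ ≤ τ₂ ∧ τ₂ < σ ∧ z = Jf pB x y σ τ₁ τ₂} := by
      rw [hB]
      congr 1
      ext w
      simp only [Set.mem_setOf_eq, hJf]
    have hmem : Jf pB x y σ a b ∈
        {z : ℝ | ∃ τ₁ τ₂, 0 < τ₁ ∧ τ₁ ≤ τ₂ ∧ τ₂ < σ ∧ z = Jf pB x y σ τ₁ τ₂} :=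
      ⟨a, b, h1, h2, h3, rfl⟩
    have hlb : ∀ w ∈ {z : ℝ | ∃ τ₁ τ₂, 0 < τ₁ ∧ τ₁ ≤ τ₂ ∧ τ₂ < σ ∧ z = Jf pB x y σ τ₁ τ₂},
        Jf pB x y σ a b ≤ w := by
      rintro w ⟨a', b', h1', h2', h3', rfl⟩
      exact hglob a' b' h1' h2' h3'
    have hBdd : BddBelow {z : ℝ | ∃ τ₁ τ₂, 0 < τ₁ ∧ τ₁ ≤ τ₂ ∧ τ₂ < σ ∧ z = Jf pB x y σ τ₁ τ₂} :=
      ⟨_, hlb⟩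
    have hBeq : B x y σ = Jf pB x y σ a b := by
      rw [hBS]
      exact le_antisymm (csInf_le hBdd hmem) (le_csInf ⟨_, hmem⟩ hlb)
    refine ⟨a, b, h1, h2, h3, hglob, hBeq, ?_⟩
    intro a' b' h1' h2' h3'
    rw [hBS]
    exact csInf_le hBdd ⟨a', b', h1', h2', h3', rfl⟩
  constructor
  · -- part (i)
    intro x hx y hy σ hσ
    obtain ⟨a, b, h1, h2, h3, hglob, hBeq, _⟩ := hmain x y σ hx hy hσ
    refine ⟨a, b, h1, h2, h3, ?_, ?_⟩
    · intro a' b' h1' h2' h3'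
      rw [hJf, hJf]
      exact hglob a' b' h1' h2' h3'
    · rw [hJf]; exact hBeq
  · -- part (ii)
    rintro ⟨x₀, y₀, σ₀⟩ ⟨hx₀, hy₀, hσ₀⟩
    simp only [Set.mem_Ioi] at hx₀ hy₀ hσ₀
    obtain ⟨C₀, hC₀nn, hbd⟩ := gB_bound pB hpB (2 * σ₀) (by linarith)
    set M : ℝ := 8 * (x₀ ^ 2 + y₀ ^ 2) / σ₀ with hMdef
    have hMpos : 0 < M := by positivity
    set D : ℝ := M + C₀ * (2 * σ₀) / 2 with hDdef
    have hDpos : 0 < D := by positivity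
    set εy : ℝ := y₀ ^ 2 / (8 * D) with hεydef
    set εx : ℝ := x₀ ^ 2 / (8 * D) with hεxdef
    have hεypos : 0 < εy := by positivity
    have hεxpos : 0 < εx := by positivity
    set r : ℝ := min x₀ (min y₀ σ₀) / 2 with hrdef
    have hrpos : 0 < r := by positivity
    have hrx : r ≤ x₀ / 2 := by
      rw [hrdef]; gcongr; exact min_le_left _ _
    have hry : r ≤ y₀ / 2 := by
      rw [hrdef]; gcongr; exact le_trans (min_le_right _ _) (min_le_left _ _)
    have hrσ : r ≤ σ₀ / 2 := by
      rw [hrdef]; gcongr; exact le_trans (min_le_right _ _) (min_le_right _ _)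
    set δ : ℝ := min r (min (εx / 8) (εy / 8)) with hδdef
    have hδpos : 0 < δ := by positivity
    have hδr : δ ≤ r := min_le_left _ _
    have hδεx : δ ≤ εx / 8 := le_trans (min_le_right _ _) (min_le_left _ _)
    have hδεy : δ ≤ εy / 8 := le_trans (min_le_right _ _) (min_le_right _ _)
    clear_value M D εy εx r δ
    set U : Set (ℝ × ℝ × ℝ) :=
      Icc (x₀ - δ) (x₀ + δ) ×ˢ (Icc (y₀ - δ) (y₀ + δ) ×ˢ Icc (σ₀ - δ) (σ₀ + δ)) with hUdef
    -- component bounds on U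
    have hcomp : ∀ w : ℝ × ℝ × ℝ, w ∈ U →
        x₀ / 2 ≤ w.1 ∧ w.1 ≤ 2 * x₀ ∧ y₀ / 2 ≤ w.2.1 ∧ w.2.1 ≤ 2 * y₀ ∧
          σ₀ / 2 ≤ w.2.2 ∧ w.2.2 ≤ 2 * σ₀ := by
      rintro w ⟨hwx, hwy, hwσ⟩
      obtain ⟨hwx1, hwx2⟩ := hwx
      obtain ⟨hwy1, hwy2⟩ := hwy
      obtain ⟨hwσ1, hwσ2⟩ := hwσ
      refine ⟨by linarith only [hwx1, hδr, hrx], by linarith only [hwx2, hδr, hrx, hx₀],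
        by linarith only [hwy1, hδr, hry], by linarith only [hwy2, hδr, hry, hy₀],
        by linarith only [hwσ1, hδr, hrσ], by linarith only [hwσ2, hδr, hrσ, hσ₀]⟩
    -- minimizer facts on U
    have hminU : ∀ w : ℝ × ℝ × ℝ, w ∈ U →
        ∃ a b : ℝ, 0 < a ∧ a ≤ b ∧ b < w.2.2 ∧ εy ≤ a ∧ εx ≤ w.2.2 - b ∧
          B w.1 w.2.1 w.2.2 = Jf pB w.1 w.2.1 w.2.2 a b ∧
          (∀ a' b' : ℝ, 0 < a' → a' ≤ b' → b' < w.2.2 →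
            B w.1 w.2.1 w.2.2 ≤ Jf pB w.1 w.2.1 w.2.2 a' b') := by
      intro w hw
      obtain ⟨hcx1, hcx2, hcy1, hcy2, hcσ1, hcσ2⟩ := hcomp w hw
      have hxw : 0 < w.1 := by linarith only [hcx1, hx₀]
      have hyw : 0 < w.2.1 := by linarith only [hcy1, hy₀]
      have hσw : 0 < w.2.2 := by linarith only [hcσ1, hσ₀]
      obtain ⟨a, b, h1, h2, h3, hglob, hBeq, hBle⟩ := hmain w.1 w.2.1 w.2.2 hxw hyw hσw
      -- upper bound at the test point σ₀/4
      have htest : Jf pB w.1 w.2.1 w.2.2 (σ₀ / 4) (σ₀ / 4) ≤ M := by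
        rw [Jf_test_eq]
        have hy2 : w.2.1 ^ 2 ≤ 4 * y₀ ^ 2 := sq_le_c _ _ hyw.le hcy2
        have hx2 : w.1 ^ 2 ≤ 4 * x₀ ^ 2 := sq_le_c _ _ hxw.le hcx2
        have e1 : w.2.1 ^ 2 / (2 * (σ₀ / 4)) ≤ 4 * y₀ ^ 2 / (2 * (σ₀ / 4)) := by gcongr
        have e2 : w.1 ^ 2 / (2 * (w.2.2 - σ₀ / 4)) ≤ 4 * x₀ ^ 2 / (2 * (σ₀ / 4)) := by
          apply div_le_div₀ (by positivity) hx2 (by positivity)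
          linarith only [hcσ1]
        have e3 : 4 * y₀ ^ 2 / (2 * (σ₀ / 4)) + 4 * x₀ ^ 2 / (2 * (σ₀ / 4)) = M := by
          rw [hMdef]; field_simp; ring
        linarith only [e1, e2, e3]
      have hJab : Jf pB w.1 w.2.1 w.2.2 a b ≤ M :=
        le_trans (hglob (σ₀ / 4) (σ₀ / 4) (by positivity) le_rfl
          (by linarith only [hcσ1, hσ₀])) htest
      have hlow := Jf_ge pB w.1 w.2.1 w.2.2 (2 * σ₀) C₀ a b (by linarith only [hσ₀]) hC₀nn hbd
        h1 h2 h3 (by linarith only [hcσ2])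
      have hyterm : 0 ≤ w.2.1 ^ 2 / (2 * a) := by positivity
      have hxterm : 0 ≤ w.1 ^ 2 / (2 * (w.2.2 - b)) := by
        have : (0:ℝ) < w.2.2 - b := by linarith only [h3]
        positivity
      have hyD : w.2.1 ^ 2 / (2 * a) ≤ D := by
        rw [hDdef]; linarith only [hlow, hJab, hxterm]
      have hxD : w.1 ^ 2 / (2 * (w.2.2 - b)) ≤ D := by
        rw [hDdef]; linarith only [hlow, hJab, hyterm]
      have hay : εy ≤ a := by
        rw [hεydef]
        exact aux_lb _ _ _ _ hDpos h1 hy₀ hcy1 hyD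
      have hbx : εx ≤ w.2.2 - b := by
        rw [hεxdef]
        exact aux_lb _ _ _ _ hDpos (by linarith only [h3]) hx₀ hcx1 hxD
      exact ⟨a, b, h1, h2, h3, hay, hbx, hBeq, hBle⟩
    set L₀ : ℝ := 2 * (2 * y₀) / (2 * εy) + 2 * (2 * x₀) / (2 * (εx / 2))
      + 4 * x₀ ^ 2 / (2 * (εx / 2) * εx) with hL₀def
    have hL₀nn : 0 ≤ L₀ := by positivity
    clear_value L₀
    -- the one-sided Lipschitz estimate
    have hkey : ∀ w ∈ U, ∀ w' ∈ U,
        B w'.1 w'.2.1 w'.2.2 - B w.1 w.2.1 w.2.2 ≤ L₀ * dist w w' := by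
      intro w hw w' hw'
      obtain ⟨a, b, h1, h2, h3, hay, hbx, hBeq, _⟩ := hminU w hw
      obtain ⟨_, _, _, _, _, _, _, _, hBle'⟩ := hminU w' hw'
      obtain ⟨hcx1, hcx2, hcy1, hcy2, hcσ1, hcσ2⟩ := hcomp w hw
      obtain ⟨hcx1', hcx2', hcy1', hcy2', hcσ1', hcσ2'⟩ := hcomp w' hw'
      set d : ℝ := dist w w' with hddef
      have hdnn : 0 ≤ d := dist_nonneg
      have hd2 : dist w.2 w'.2 ≤ d := by
        rw [hddef, Prod.dist_eq]; exact le_max_right _ _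
      have hdx : |w'.1 - w.1| ≤ d := by
        rw [← Real.dist_eq, dist_comm w'.1 w.1, hddef, Prod.dist_eq]
        exact le_max_left _ _
      have hdy : |w'.2.1 - w.2.1| ≤ d := by
        rw [← Real.dist_eq, dist_comm w'.2.1 w.2.1]
        refine le_trans ?_ hd2
        rw [Prod.dist_eq]; exact le_max_left _ _
      have hdσ : |w'.2.2 - w.2.2| ≤ d := by
        rw [← Real.dist_eq, dist_comm w'.2.2 w.2.2]
        refine le_trans ?_ hd2
        rw [Prod.dist_eq]; exact le_max_right _ _
      clear_value d
      -- σ' - b is still bounded below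
      have hσσ' : |w'.2.2 - w.2.2| ≤ 2 * δ := by
        obtain ⟨_, _, hwσ⟩ := hw
        obtain ⟨_, _, hwσ'⟩ := hw'
        rw [abs_sub_le_iff]
        constructor
        · linarith only [hwσ.1, hwσ'.2]
        · linarith only [hwσ.2, hwσ'.1]
      have hA' : εx / 2 ≤ w'.2.2 - b := by
        have h := abs_le.mp hσσ'
        linarith only [h.1, h.2, hbx, hδεx]
      have hb' : b < w'.2.2 := by linarith only [hA', hεxpos]
      have hBle2 : B w'.1 w'.2.1 w'.2.2 ≤ Jf pB w'.1 w'.2.1 w'.2.2 a b :=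
        hBle' a b h1 h2 hb'
      -- difference of the two J values
      have hdiff : Jf pB w'.1 w'.2.1 w'.2.2 a b - Jf pB w.1 w.2.1 w.2.2 a b =
          (w'.2.1 ^ 2 - w.2.1 ^ 2) / (2 * a)
          + (w'.1 ^ 2 - w.1 ^ 2) / (2 * (w'.2.2 - b))
          + w.1 ^ 2 * ((w.2.2 - b) - (w'.2.2 - b)) / (2 * (w'.2.2 - b) * (w.2.2 - b)) := by
        unfold Jf
        have hA'ne : w'.2.2 - b ≠ 0 := ne_of_gt (by linarith only [hA', hεxpos])
        have hAne : w.2.2 - b ≠ 0 := ne_of_gt (by linarith only [hbx, hεxpos])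
        field_simp
        ring
      -- bound the three pieces
      have hy2 : w'.2.1 ^ 2 - w.2.1 ^ 2 ≤ 2 * (2 * y₀) * d :=
        sq_sub_le _ _ _ _ hdy (by linarith only [hcy1, hy₀]) (by linarith only [hcy1', hy₀])
          hcy2 hcy2'
      have hx2 : w'.1 ^ 2 - w.1 ^ 2 ≤ 2 * (2 * x₀) * d :=
        sq_sub_le _ _ _ _ hdx (by linarith only [hcx1, hx₀]) (by linarith only [hcx1', hx₀])
          hcx2 hcx2'
      have hσ2 : w.1 ^ 2 * ((w.2.2 - b) - (w'.2.2 - b)) ≤ 4 * x₀ ^ 2 * d := by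
        apply mul_abs_le _ _ _ _ (sq_nonneg _)
          (sq_le_c _ _ (by linarith only [hcx1, hx₀]) hcx2)
        rw [show (w.2.2 - b) - (w'.2.2 - b) = -(w'.2.2 - w.2.2) by ring, abs_neg]
        exact hdσ
      have p1 : (w'.2.1 ^ 2 - w.2.1 ^ 2) / (2 * a) ≤ 2 * (2 * y₀) * d / (2 * εy) :=
        div_le_div₀ (by positivity) hy2 (by positivity) (by linarith only [hay])
      have p2 : (w'.1 ^ 2 - w.1 ^ 2) / (2 * (w'.2.2 - b)) ≤
          2 * (2 * x₀) * d / (2 * (εx / 2)) :=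
        div_le_div₀ (by positivity) hx2 (by positivity) (by linarith only [hA'])
      have p3 : w.1 ^ 2 * ((w.2.2 - b) - (w'.2.2 - b)) / (2 * (w'.2.2 - b) * (w.2.2 - b)) ≤
          4 * x₀ ^ 2 * d / (2 * (εx / 2) * εx) :=
        div_le_div₀ (by positivity) hσ2 (by positivity) (prod_lb _ _ _ hεxpos hA' hbx)
      have hsum : 2 * (2 * y₀) * d / (2 * εy) + 2 * (2 * x₀) * d / (2 * (εx / 2))
          + 4 * x₀ ^ 2 * d / (2 * (εx / 2) * εx) = L₀ * d := by
        rw [hL₀def]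
        field_simp
      linarith only [hBle2, hBeq.le, hBeq.ge, hdiff, p1, p2, p3, hsum]
    -- conclude Lipschitz continuity
    refine ⟨Real.toNNReal L₀, U, ?_, ?_⟩
    · apply mem_nhdsWithin_of_mem_nhds
      rw [hUdef]
      exact prod_mem_nhds (Icc_mem_nhds (by linarith) (by linarith))
        (prod_mem_nhds (Icc_mem_nhds (by linarith) (by linarith))
          (Icc_mem_nhds (by linarith) (by linarith)))
    · rw [lipschitzOnWith_iff_dist_le_mul]
      intro w hw w' hw'
      rw [Real.dist_eq, Real.coe_toNNReal _ hL₀nn, abs_sub_le_iff]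
      constructor
      · have := hkey w' hw' w hw
        rw [dist_comm] at this
        linarith only [this]
      · exact hkey w hw w' hw'
end

section
/- Let Ω ⊆ (0,∞)×(0,∞) be an open set and let τ₂ : Ω → ℝ be differentiable with τ₂(x,τ) < τ on Ω. Define p(x,τ) := x/(τ − τ₂(x,τ)) on Ω, and suppose ∂_τ p + p ∂_x p = 0 on Ω. Then ∂_τ τ₂ + p ∂_x τ₂ = 0 on Ω; consequently, for every differentiable g : ℝ → ℝ, the function V(x,τ) := g(τ₂(x,τ)) satisfies ∂_τ V + p ∂_x V = 0 on Ω. -/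
open Set

/-- Transport identity preceding (3.24) in the proof of Theorem 3.2: if
`p(x,τ) = x/(τ − τ₂(x,τ))` satisfies `p_τ + p p_x = 0` on an open set
`Ω ⊆ (0,∞)×(0,∞)` with `τ₂` differentiable and `τ₂(x,τ) < τ`, then
`(τ₂)_τ + p (τ₂)_x = 0` on `Ω`, and consequently `V = g ∘ τ₂` satisfies
`V_τ + p V_x = 0` for every differentiable `g`. -/
theorem transport_identity_boundary
    (Ω : Set (ℝ × ℝ)) (hΩopen : IsOpen Ω) (hΩsub : Ω ⊆ Set.Ioi 0 ×ˢ Set.Ioi 0)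
    (τ₂ : ℝ → ℝ → ℝ)
    (hτ₂ : ∀ z ∈ Ω, DifferentiableAt ℝ (fun w : ℝ × ℝ => τ₂ w.1 w.2) z)
    (hτ₂lt : ∀ z ∈ Ω, τ₂ z.1 z.2 < z.2)
    (p : ℝ → ℝ → ℝ)
    (hp : ∀ x σ, p x σ = x / (σ - τ₂ x σ))
    (hpeq : ∀ z ∈ Ω,
      deriv (fun s => p z.1 s) z.2 + p z.1 z.2 * deriv (fun w => p w z.2) z.1 = 0) :
    (∀ z ∈ Ω,
      deriv (fun s => τ₂ z.1 s) z.2 + p z.1 z.2 * deriv (fun w => τ₂ w z.2) z.1 = 0) ∧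
    (∀ g : ℝ → ℝ, Differentiable ℝ g → ∀ z ∈ Ω,
      deriv (fun s => g (τ₂ z.1 s)) z.2
        + p z.1 z.2 * deriv (fun w => g (τ₂ w z.2)) z.1 = 0) := by
  -- key fact: existence of partial derivatives A, B of τ₂ with A + p·B = 0
  have key : ∀ z ∈ Ω, ∃ A B : ℝ,
      HasDerivAt (fun s => τ₂ z.1 s) A z.2 ∧
      HasDerivAt (fun w => τ₂ w z.2) B z.1 ∧
      A + p z.1 z.2 * B = 0 := by
    rintro ⟨a, b⟩ hz
    have hsub := hΩsub hz
    have ha : (0:ℝ) < a := hsub.1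
    have hd : (0:ℝ) < b - τ₂ a b := sub_pos.mpr (hτ₂lt _ hz)
    have hd0 : b - τ₂ a b ≠ 0 := ne_of_gt hd
    have hf := (hτ₂ _ hz).hasFDerivAt
    set L := fderiv ℝ (fun w : ℝ × ℝ => τ₂ w.1 w.2) (a, b) with hL
    have hgb : HasDerivAt (fun s : ℝ => ((a, s) : ℝ × ℝ)) ((0:ℝ), (1:ℝ)) b :=
      HasDerivAt.prodMk (hasDerivAt_const b a) (hasDerivAt_id b)
    have hga : HasDerivAt (fun w : ℝ => ((w, b) : ℝ × ℝ)) ((1:ℝ), (0:ℝ)) a :=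
      HasDerivAt.prodMk (hasDerivAt_id a) (hasDerivAt_const a b)
    have hA : HasDerivAt (fun s => τ₂ a s) (L (0, 1)) b := hf.comp_hasDerivAt b hgb
    have hB : HasDerivAt (fun w => τ₂ w b) (L (1, 0)) a := (hf.comp_hasDerivAt a hga :)
    set A := L (0, 1)
    set B := L (1, 0)
    refine ⟨A, B, hA, hB, ?_⟩
    have hdenτ : HasDerivAt (fun s : ℝ => s - τ₂ a s) (1 - A) b :=
      (hasDerivAt_id b).sub hA
    have hpτ : HasDerivAt (fun s => p a s) ((0 * (b - τ₂ a b) - a * (1 - A)) /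
        (b - τ₂ a b) ^ 2) b := by
      have := HasDerivAt.fun_div (hasDerivAt_const b a) hdenτ hd0
      simpa [hp] using this
    have hdenx : HasDerivAt (fun w : ℝ => b - τ₂ w b) (0 - B) a :=
      (hasDerivAt_const a b).sub hB
    have hpx : HasDerivAt (fun w => p w b) ((1 * (b - τ₂ a b) - a * (0 - B)) /
        (b - τ₂ a b) ^ 2) a := by
      have := HasDerivAt.fun_div (hasDerivAt_id a) hdenx hd0
      simpa [hp] using this
    have heq := hpeq _ hz
    simp only at heq
    rw [hpτ.deriv, hpx.deriv, hp] at heq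
    have heq' : a * (A + a / (b - τ₂ a b) * B) / (b - τ₂ a b) ^ 2 = 0 := by
      rw [← heq]; field_simp; ring
    have hnum : a * (A + a / (b - τ₂ a b) * B) = 0 :=
      (div_eq_zero_iff.mp heq').resolve_right (pow_ne_zero 2 hd0)
    have hAB : A + a / (b - τ₂ a b) * B = 0 :=
      (mul_eq_zero.mp hnum).resolve_left (ne_of_gt ha)
    rw [hp]; exact hAB
  constructor
  · rintro z hz
    obtain ⟨A, B, hA, hB, hAB⟩ := key z hz
    rw [hA.deriv, hB.deriv]; exact hAB
  · rintro g hg z hz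
    obtain ⟨A, B, hA, hB, hAB⟩ := key z hz
    have h1 : HasDerivAt (fun s => g (τ₂ z.1 s)) (deriv g (τ₂ z.1 z.2) * A) z.2 :=
      (hg (τ₂ z.1 z.2)).hasDerivAt.comp z.2 hA
    have h2 : HasDerivAt (fun w => g (τ₂ w z.2)) (deriv g (τ₂ z.1 z.2) * B) z.1 :=
      (hg (τ₂ z.1 z.2)).hasDerivAt.comp z.1 hB
    rw [h1.deriv, h2.deriv]
    have : deriv g (τ₂ z.1 z.2) * (A + p z.1 z.2 * B) = 0 := by rw [hAB]; ring
    linarith [this, mul_add (deriv g (τ₂ z.1 z.2)) A (p z.1 z.2 * B)]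
end

section
/- Let α : [0,∞) → ℝ be infinitely differentiable; set A(t) := exp(∫₀ᵗ α(s) ds), τ(t) := ∫₀ᵗ A(s)⁻¹ ds and T* := ∫₀^∞ A(s)⁻¹ ds ∈ (0,∞]. Let p : (0,∞)×(0,T*) → ℝ be locally bounded and measurable, and suppose that for every ψ ∈ C_c^∞((0,∞)×(0,T*)), ∬ ( p ∂_τ ψ + (p²/2) ∂_x ψ ) dx dτ = 0. Then u(x,t) := A(t)⁻¹ p(x, τ(t)) satisfies, for every φ ∈ C_c^∞((0,∞)×(0,∞)), ∬ ( u ∂_t φ + (u²/2) ∂_x φ − α(t) u φ ) dx dt = 0. -/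
open MeasureTheory Set Filter Topology
open scoped ENNReal

private lemma wst_one_le : ((⊤:ℕ∞) : WithTop ℕ∞) ≠ 0 := by simp

private lemma wst_partial_snd {f : ℝ×ℝ → ℝ} (hf : ContDiff ℝ (⊤:ℕ∞) f) (z : ℝ×ℝ) :
    HasDerivAt (fun s => f (z.1, s)) (fderiv ℝ f z (0,1)) z.2 := by
  have h1 : HasDerivAt (fun s : ℝ => ((z.1, s) : ℝ×ℝ)) (0,1) z.2 :=
    (hasDerivAt_const _ _).prodMk (hasDerivAt_id _)
  exact ((hf.differentiable wst_one_le z).hasFDerivAt).comp_hasDerivAt z.2 h1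

private lemma wst_partial_fst {f : ℝ×ℝ → ℝ} (hf : ContDiff ℝ (⊤:ℕ∞) f) (z : ℝ×ℝ) :
    HasDerivAt (fun w => f (w, z.2)) (fderiv ℝ f z (1,0)) z.1 := by
  have h1 : HasDerivAt (fun w : ℝ => ((w, z.2) : ℝ×ℝ)) (1,0) z.1 :=
    (hasDerivAt_id _).prodMk (hasDerivAt_const _ _)
  exact ((hf.differentiable wst_one_le z).hasFDerivAt).comp_hasDerivAt z.1 h1

private lemma wst_cont_partial {f : ℝ×ℝ → ℝ} (hf : ContDiff ℝ (⊤:ℕ∞) f) (v : ℝ×ℝ) :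
    Continuous (fun z => fderiv ℝ f z v) :=
  (hf.continuous_fderiv wst_one_le).clm_apply continuous_const

private lemma wst_fderiv_zero {f : ℝ×ℝ → ℝ} {z : ℝ×ℝ} (hz : z ∉ tsupport f) :
    fderiv ℝ f z = 0 := by
  by_contra h
  exact hz (support_fderiv_subset ℝ (Function.mem_support.mpr h))

private lemma wst_primitive_sderiv {g : ℝ → ℝ} (hg : Continuous g) (t : ℝ) :
    HasStrictDerivAt (fun t => ∫ s in (0:ℝ)..t, g s) (g t) t :=
  intervalIntegral.integral_hasStrictDerivAt_right (hg.intervalIntegrable 0 t)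
    (hg.stronglyMeasurable.stronglyMeasurableAtFilter) hg.continuousAt

private lemma wst_primitive_smooth {g : ℝ → ℝ} (hg : ContDiff ℝ (⊤:ℕ∞) g) :
    ContDiff ℝ (⊤:ℕ∞) (fun t => ∫ s in (0:ℝ)..t, g s) := by
  have h := fun t => (wst_primitive_sderiv hg.continuous t).hasDerivAt
  rw [show (((⊤:ℕ∞)) : WithTop ℕ∞) = ((⊤ : ℕ∞) : WithTop ℕ∞) from rfl, contDiff_infty_iff_deriv]
  refine ⟨fun t => (h t).differentiableAt, ?_⟩
  have : deriv (fun t => ∫ s in (0:ℝ)..t, g s) = g := funext fun t => (h t).deriv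
  rw [this]; exact hg

private lemma wst_compact_in_box (K : Set (ℝ×ℝ)) (hK : IsCompact K)
    (hKs : K ⊆ Set.Ioi 0 ×ˢ Set.Ioi 0) :
    ∃ ε M : ℝ, 0 < ε ∧ ε ≤ M ∧ K ⊆ Icc ε M ×ˢ Icc ε M := by
  rcases K.eq_empty_or_nonempty with h | h
  · exact ⟨1, 1, one_pos, le_refl _, by simp [h]⟩
  · obtain ⟨z₀, hz₀K, hz₀⟩ := hK.exists_isMinOn h
      (continuous_fst.min continuous_snd).continuousOn
    obtain ⟨z₁, hz₁K, hz₁⟩ := hK.exists_isMaxOn h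
      (continuous_fst.max continuous_snd).continuousOn
    have h0 := hKs hz₀K
    refine ⟨min z₀.1 z₀.2, max z₁.1 z₁.2, lt_min h0.1 h0.2, ?_, fun z hz => ?_⟩
    · have h2 : max z₀.1 z₀.2 ≤ max z₁.1 z₁.2 := hz₁ hz₀K
      exact le_trans (min_le_left _ _) (le_trans (le_max_left _ _) h2)
    · have h1 : min z₀.1 z₀.2 ≤ min z.1 z.2 := hz₀ hz
      have h2 : max z.1 z.2 ≤ max z₁.1 z₁.2 := hz₁ hz
      simp only [mem_prod, mem_Icc]
      constructor
      · exact ⟨le_trans h1 (min_le_left _ _), le_trans (le_max_left _ _) h2⟩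
      · exact ⟨le_trans h1 (min_le_right _ _), le_trans (le_max_right _ _) h2⟩

private lemma wst_ofReal_lt (A : ℝ → ℝ) (hAc : Continuous A) (hApos : ∀ t, 0 < A t)
    (M : ℝ) (hM : 0 ≤ M) (τM : ℝ) (hτM : τM = ∫ s in (0:ℝ)..M, (A s)⁻¹) :
    ENNReal.ofReal τM < ∫⁻ s in Set.Ioi (0:ℝ), ENNReal.ofReal ((A s)⁻¹) := by
  have hAinv : Continuous fun s => (A s)⁻¹ := hAc.inv₀ fun t => (hApos t).ne'
  have hsplit : Set.Ioi (0:ℝ) = Set.Ioc 0 M ∪ Set.Ioi M := (Set.Ioc_union_Ioi_eq_Ioi hM).symm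
  have hdisj : Disjoint (Set.Ioc (0:ℝ) M) (Set.Ioi M) := Set.Ioc_disjoint_Ioi le_rfl
  have h1 : ∫⁻ s in Set.Ioi (0:ℝ), ENNReal.ofReal ((A s)⁻¹)
      = (∫⁻ s in Set.Ioc (0:ℝ) M, ENNReal.ofReal ((A s)⁻¹))
        + ∫⁻ s in Set.Ioi M, ENNReal.ofReal ((A s)⁻¹) := by
    rw [hsplit, lintegral_union measurableSet_Ioi hdisj]
  have h2 : ENNReal.ofReal τM = ∫⁻ s in Set.Ioc (0:ℝ) M, ENNReal.ofReal ((A s)⁻¹) := by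
    rw [hτM, intervalIntegral.integral_of_le hM]
    exact ofReal_integral_eq_lintegral_ofReal (hAinv.integrableOn_Ioc)
      (Eventually.of_forall fun s => (inv_pos.mpr (hApos s)).le)
  obtain ⟨z₁, hz₁K, hz₁⟩ := (isCompact_Icc (a := M) (b := M+1)).exists_isMaxOn
    ⟨M, by simp⟩ hAc.continuousOn
  have hc : (0:ℝ) < (A z₁)⁻¹ := inv_pos.mpr (hApos z₁)
  have htail : (0:ℝ≥0∞) < ∫⁻ s in Set.Ioi M, ENNReal.ofReal ((A s)⁻¹) := by
    have hsub : Set.Ioc M (M+1) ⊆ Set.Ioi M := Set.Ioc_subset_Ioi_self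
    have hmono : ENNReal.ofReal ((A z₁)⁻¹) * volume (Set.Ioc M (M+1))
        ≤ ∫⁻ s in Set.Ioc M (M+1), ENNReal.ofReal ((A s)⁻¹) := by
      rw [← setLIntegral_const]
      refine setLIntegral_mono' measurableSet_Ioc fun s hs => ?_
      exact ENNReal.ofReal_le_ofReal (inv_anti₀ (hApos s) (hz₁ (Set.Ioc_subset_Icc_self hs)))
    have hvol : volume (Set.Ioc M (M+1)) = 1 := by simp
    calc (0:ℝ≥0∞) < ENNReal.ofReal ((A z₁)⁻¹) * volume (Set.Ioc M (M+1)) := by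
          rw [hvol, mul_one]; exact ENNReal.ofReal_pos.mpr hc
      _ ≤ ∫⁻ s in Set.Ioc M (M+1), ENNReal.ofReal ((A s)⁻¹) := hmono
      _ ≤ ∫⁻ s in Set.Ioi M, ENNReal.ofReal ((A s)⁻¹) := lintegral_mono_set hsub
  rw [h1, ← h2]
  exact ENNReal.lt_add_right ENNReal.ofReal_ne_top htail.ne'

/-- The `u`-component of Theorem 3.3: a distributional solution `p` of the Burgers
equation `p_τ + (p²/2)_x = 0` on `(0,∞)×(0,T*)` transforms, via
`u(x,t) = A(t)⁻¹ p(x,τ(t))`, into a distributional solution of the damped Burgers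
equation `u_t + (u²/2)_x + α(t)u = 0` on `(0,∞)×(0,∞)`. -/
theorem weak_solution_transform
    (α : ℝ → ℝ) (hα : ContDiff ℝ (⊤:ℕ∞) α)
    (A : ℝ → ℝ) (hA : ∀ t, A t = Real.exp (∫ s in (0:ℝ)..t, α s))
    (τ : ℝ → ℝ) (hτ : ∀ t, τ t = ∫ s in (0:ℝ)..t, (A s)⁻¹)
    (Tstar : ℝ≥0∞) (hT : Tstar = ∫⁻ s in Set.Ioi (0:ℝ), ENNReal.ofReal ((A s)⁻¹))
    (p : ℝ → ℝ → ℝ)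
    (hpm : Measurable (fun z : ℝ × ℝ => p z.1 z.2))
    (hploc : ∀ K : Set (ℝ × ℝ), IsCompact K →
      K ⊆ {z : ℝ × ℝ | 0 < z.1 ∧ 0 < z.2 ∧ ENNReal.ofReal z.2 < Tstar} →
      ∃ M, ∀ z ∈ K, |p z.1 z.2| ≤ M)
    (hweak : ∀ ψ : ℝ × ℝ → ℝ, ContDiff ℝ (⊤:ℕ∞) ψ → HasCompactSupport ψ →
      tsupport ψ ⊆ {z : ℝ × ℝ | 0 < z.1 ∧ 0 < z.2 ∧ ENNReal.ofReal z.2 < Tstar} →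
      (∫ z : ℝ × ℝ, (p z.1 z.2 * deriv (fun s => ψ (z.1, s)) z.2
        + (p z.1 z.2) ^ 2 / 2 * deriv (fun w => ψ (w, z.2)) z.1)) = 0)
    (u : ℝ → ℝ → ℝ)
    (hu : ∀ x t, u x t = (A t)⁻¹ * p x (τ t)) :
    ∀ φ : ℝ × ℝ → ℝ, ContDiff ℝ (⊤:ℕ∞) φ → HasCompactSupport φ →
      tsupport φ ⊆ Set.Ioi 0 ×ˢ Set.Ioi 0 →
      (∫ z : ℝ × ℝ, (u z.1 z.2 * deriv (fun s => φ (z.1, s)) z.2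
        + (u z.1 z.2) ^ 2 / 2 * deriv (fun w => φ (w, z.2)) z.1
        - α z.2 * u z.1 z.2 * φ z)) = 0 := by
  intro φ hφ hφc hφs
  classical
  -- ## Basic facts about A
  have hAfun : A = fun t => Real.exp (∫ s in (0:ℝ)..t, α s) := funext hA
  have hApos : ∀ t, 0 < A t := fun t => by rw [hA]; exact Real.exp_pos _
  have hAne : ∀ t, A t ≠ 0 := fun t => (hApos t).ne'
  have hA' : ∀ t, HasStrictDerivAt A (α t * A t) t := by
    intro t
    have := (wst_primitive_sderiv hα.continuous t).exp
    rw [hAfun]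
    simpa [← hA t, mul_comm] using this
  have hAsmooth : ContDiff ℝ (⊤:ℕ∞) A := by
    rw [hAfun]; exact Real.contDiff_exp.comp (wst_primitive_smooth hα)
  have hAc : Continuous A := hAsmooth.continuous
  have hAinvc : Continuous fun s => (A s)⁻¹ := hAc.inv₀ hAne
  -- ## Basic facts about τ
  have hτfun : τ = fun t => ∫ s in (0:ℝ)..t, (A s)⁻¹ := funext hτ
  have hτ' : ∀ t, HasStrictDerivAt τ (A t)⁻¹ t := by
    intro t; rw [hτfun]; exact wst_primitive_sderiv hAinvc t
  have hτsmooth : ContDiff ℝ (⊤:ℕ∞) τ := by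
    rw [hτfun]; exact wst_primitive_smooth (hAsmooth.inv hAne)
  have hτc : Continuous τ := hτsmooth.continuous
  have hτmono : StrictMono τ :=
    strictMono_of_deriv_pos fun t => by
      rw [(hτ' t).hasDerivAt.deriv]; exact inv_pos.mpr (hApos t)
  have hinj : Function.Injective τ := hτmono.injective
  have hτ0 : τ 0 = 0 := by rw [hτ]; exact intervalIntegral.integral_same
  -- ## The inverse function T
  set T := Function.invFun τ with hTdef
  have hTτ : ∀ t, T (τ t) = t := Function.leftInverse_invFun hinj
  have hopen : IsOpen (range τ) := by
    have := isOpenMap_of_hasStrictDerivAt hτ' (fun t => inv_ne_zero (hAne t))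
    simpa using this.isOpen_range
  have hT' : ∀ t, HasStrictDerivAt T (A t) (τ t) := by
    intro t
    have := (hτ' t).to_local_left_inverse (f' := (A t)⁻¹) (inv_ne_zero (hAne t))
      (g := T) (Eventually.of_forall hTτ)
    simpa using this
  have hTsm : ∀ t, ContDiffAt ℝ (⊤:ℕ∞) T (τ t) := by
    intro t
    have hf : ContDiffAt ℝ (⊤:ℕ∞) τ t := hτsmooth.contDiffAt
    have hune : ((A t)⁻¹ : ℝ) ≠ 0 := inv_ne_zero (hAne t)
    set f' : ℝ ≃L[ℝ] ℝ := ContinuousLinearEquiv.unitsEquivAut ℝ (Units.mk0 _ hune) with hf'def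
    have hfd : HasFDerivAt τ (f' : ℝ →L[ℝ] ℝ) t := by
      have := (hτ' t).hasDerivAt.hasFDerivAt
      exact this.congr_fderiv (by rw [hf'def]; ext; simp)
    have hg := hf.to_localInverse (f' := f') hfd wst_one_le
    have hev : ∀ᶠ y in 𝓝 (τ t), τ (hf.localInverse hfd wst_one_le y) = y :=
      (hf.hasStrictFDerivAt' hfd wst_one_le).eventually_right_inverse
    refine hg.congr_of_eventuallyEq ?_
    filter_upwards [hev, hopen.mem_nhds (mem_range_self t)] with y h1 h2
    exact hinj ((Function.invFun_eq h2).trans h1.symm)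
  have hrconn : OrdConnected (range τ) := by
    rw [← image_univ]
    exact (isPreconnected_univ.image τ hτc.continuousOn).ordConnected
  -- ## The box containing the support of φ
  obtain ⟨ε, M, hε, hεM, hbox⟩ := wst_compact_in_box (tsupport φ) hφc hφs
  have hτε : 0 < τ ε := by rw [← hτ0]; exact hτmono hε
  have hτεM : τ ε ≤ τ M := hτmono.le_iff_le.mpr hεM
  have hτMlt : ENNReal.ofReal (τ M) < Tstar := by
    rw [hT]
    exact wst_ofReal_lt A hAc hApos M (le_trans hε.le hεM) (τ M) (hτ M)
  -- the compact box for ψ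
  set K' : Set (ℝ×ℝ) := Icc ε M ×ˢ Icc (τ ε) (τ M) with hK'def
  have hK'cpt : IsCompact K' := (isCompact_Icc).prod isCompact_Icc
  have hK'adm : K' ⊆ {z : ℝ × ℝ | 0 < z.1 ∧ 0 < z.2 ∧ ENNReal.ofReal z.2 < Tstar} := by
    rintro ⟨x, σ⟩ ⟨hx, hσ⟩
    exact ⟨lt_of_lt_of_le hε hx.1, lt_of_lt_of_le hτε hσ.1,
      lt_of_le_of_lt (ENNReal.ofReal_le_ofReal hσ.2) hτMlt⟩
  obtain ⟨Mp, hMp⟩ := hploc K' hK'cpt hK'adm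
  have hK'ne : ((ε, τ ε) : ℝ×ℝ) ∈ K' :=
    ⟨⟨le_refl _, hεM⟩, ⟨le_refl _, hτεM⟩⟩
  have hMp0 : 0 ≤ Mp := le_trans (abs_nonneg _) (hMp _ hK'ne)
  -- ## Definition of ψ
  set ψ : ℝ×ℝ → ℝ := fun z =>
    if z.2 ∈ range τ then (A (T z.2))⁻¹ * φ (z.1, T z.2) else 0 with hψdef
  have hψval : ∀ x t, ψ (x, τ t) = (A t)⁻¹ * φ (x, t) := by
    intro x t
    simp only [hψdef, if_pos (mem_range_self t), hTτ t]
  -- ψ vanishes off K'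
  have hψ0 : ∀ z : ℝ×ℝ, z ∉ K' → ψ z = 0 := by
    rintro ⟨x, σ⟩ hz
    by_cases hσ : σ ∈ range τ
    · obtain ⟨s, rfl⟩ := hσ
      rw [hψval]
      by_cases hφ0 : φ (x, s) = 0
      · rw [hφ0, mul_zero]
      · exfalso
        have hmem : (x, s) ∈ tsupport φ := subset_closure (Function.mem_support.mpr hφ0)
        have := hbox hmem
        exact hz ⟨this.1, ⟨hτmono.le_iff_le.mpr this.2.1, hτmono.le_iff_le.mpr this.2.2⟩⟩
    · simp only [hψdef, if_neg hσ]
  have hψsupp : tsupport ψ ⊆ K' :=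
    closure_minimal (Function.support_subset_iff'.mpr fun z hz => hψ0 z hz)
      (isClosed_Icc.prod isClosed_Icc)
  have hψc : HasCompactSupport ψ := HasCompactSupport.intro hK'cpt hψ0
  -- off-range elements are outside [τ ε, τ M]
  have houtside : ∀ σ : ℝ, σ ∉ range τ → σ < τ ε ∨ τ M < σ := by
    intro σ hσ
    by_contra h
    push_neg at h
    exact hσ (hrconn.out (mem_range_self ε) (mem_range_self M) ⟨h.1, h.2⟩)
  -- ## smoothness of ψ
  have hψsm : ContDiff ℝ (⊤:ℕ∞) ψ := by
    rw [contDiff_iff_contDiffAt]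
    intro z
    by_cases hz : z.2 ∈ range τ
    · obtain ⟨t, ht⟩ := hz
      have hTz : ContDiffAt ℝ (⊤:ℕ∞) T z.2 := ht ▸ hTsm t
      have c1 : ContDiffAt ℝ (⊤:ℕ∞) (fun w : ℝ×ℝ => T w.2) z :=
        hTz.comp z contDiffAt_snd
      have c2 : ContDiffAt ℝ (⊤:ℕ∞) (fun w : ℝ×ℝ => A (T w.2)) z :=
        hAsmooth.contDiffAt.comp z c1
      have c3 : ContDiffAt ℝ (⊤:ℕ∞) (fun w : ℝ×ℝ => (A (T w.2))⁻¹) z :=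
        c2.inv (hAne _)
      have c4 : ContDiffAt ℝ (⊤:ℕ∞) (fun w : ℝ×ℝ => φ (w.1, T w.2)) z :=
        hφ.contDiffAt.comp z (contDiffAt_fst.prodMk c1)
      refine (c3.mul c4).congr_of_eventuallyEq ?_
      have hU : (Prod.snd) ⁻¹' (range τ) ∈ 𝓝 z :=
        (hopen.preimage continuous_snd).mem_nhds (show z.2 ∈ range τ from ht ▸ mem_range_self t)
      filter_upwards [hU] with w hw
      exact if_pos hw
    · have hσ := houtside z.2 hz
      have hU : IsOpen {w : ℝ×ℝ | w.2 < τ ε ∨ τ M < w.2} := by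
        apply IsOpen.union
        · exact isOpen_lt continuous_snd continuous_const
        · exact isOpen_lt continuous_const continuous_snd
      refine (contDiffAt_const (c := (0:ℝ))).congr_of_eventuallyEq ?_
      filter_upwards [hU.mem_nhds hσ] with w hw
      refine hψ0 w fun hwK => ?_
      rcases hw with h | h
      · exact absurd hwK.2.1 (not_le.mpr h)
      · exact absurd hwK.2.2 (not_le.mpr h)
  -- ## apply the weak formulation to ψ
  have hG0 := hweak ψ hψsm hψc (hψsupp.trans hK'adm)
  -- ## partial derivative functions
  set φt : ℝ×ℝ → ℝ := fun z => fderiv ℝ φ z (0,1) with hφtdef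
  set φx : ℝ×ℝ → ℝ := fun z => fderiv ℝ φ z (1,0) with hφxdef
  set ψt : ℝ×ℝ → ℝ := fun z => fderiv ℝ ψ z (0,1) with hψtdef
  set ψx : ℝ×ℝ → ℝ := fun z => fderiv ℝ ψ z (1,0) with hψxdef
  set Ffun : ℝ×ℝ → ℝ := fun z => (A z.2)⁻¹ * p z.1 (τ z.2) * φt z
      + ((A z.2)⁻¹ * p z.1 (τ z.2)) ^ 2 / 2 * φx z
      - α z.2 * ((A z.2)⁻¹ * p z.1 (τ z.2)) * φ z with hFdef
  set Gfun : ℝ×ℝ → ℝ := fun z => p z.1 z.2 * ψt z + (p z.1 z.2) ^ 2 / 2 * ψx z with hGdef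
  have hGeq : (fun z : ℝ×ℝ => (p z.1 z.2 * deriv (fun s => ψ (z.1, s)) z.2
      + (p z.1 z.2) ^ 2 / 2 * deriv (fun w => ψ (w, z.2)) z.1)) = Gfun := by
    funext z
    rw [hGdef]
    rw [(wst_partial_snd hψsm z).deriv, (wst_partial_fst hψsm z).deriv]
  rw [hGeq] at hG0
  have hFeq : (fun z : ℝ×ℝ => (u z.1 z.2 * deriv (fun s => φ (z.1, s)) z.2
      + (u z.1 z.2) ^ 2 / 2 * deriv (fun w => φ (w, z.2)) z.1
      - α z.2 * u z.1 z.2 * φ z)) = Ffun := by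
    funext z
    rw [hFdef, hu, (wst_partial_snd hφ z).deriv, (wst_partial_fst hφ z).deriv]
  rw [show (∫ z : ℝ × ℝ, (u z.1 z.2 * deriv (fun s => φ (z.1, s)) z.2
      + (u z.1 z.2) ^ 2 / 2 * deriv (fun w => φ (w, z.2)) z.1
      - α z.2 * u z.1 z.2 * φ z)) = ∫ z : ℝ×ℝ, Ffun z from by rw [hFeq]]
  -- ## the key pointwise identity
  have hkey : ∀ x t : ℝ, |(A t)⁻¹| • Gfun (x, τ t) = Ffun (x, t) := by
    intro x t
    -- derivative of σ ↦ ψ (x, σ) at τ t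
    have hTd : HasDerivAt T (A t) (τ t) := (hT' t).hasDerivAt
    have hATd : HasDerivAt (fun σ => A (T σ)) (α t * A t * A t) (τ t) := by
      have hg : HasDerivAt A (α t * A t) (T (τ t)) := by rw [hTτ t]; exact (hA' t).hasDerivAt
      exact HasDerivAt.comp (τ t) (by rw [hTτ t] at hg ⊢; exact hg) hTd
    have hinvd : HasDerivAt (fun σ => (A (T σ))⁻¹)
        (-(α t * A t * A t) / (A t) ^ 2) (τ t) := by
      have := hATd.inv (by rw [hTτ t]; exact hAne t)
      simp only [hTτ t] at this; exact this
    have hφtd : HasDerivAt (fun s => φ (x, s)) (φt (x, t)) t := wst_partial_snd hφ (x, t)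
    have hφTd : HasDerivAt (fun σ => φ (x, T σ)) (φt (x, t) * A t) (τ t) := by
      have hg : HasDerivAt (fun s => φ (x, s)) (φt (x, t)) (T (τ t)) := by
        rw [hTτ t]; exact hφtd
      exact HasDerivAt.comp (τ t) (by rw [hTτ t] at hg ⊢; exact hg) hTd
    have hmul : HasDerivAt (fun σ => (A (T σ))⁻¹ * φ (x, T σ))
        (-(α t * A t * A t) / (A t) ^ 2 * φ (x, t) + (A t)⁻¹ * (φt (x, t) * A t)) (τ t) := by
      have := hinvd.mul hφTd
      simp only [hTτ t] at this; exact this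
    have heq : (fun σ => ψ (x, σ)) =ᶠ[𝓝 (τ t)]
        (fun σ => (A (T σ))⁻¹ * φ (x, T σ)) := by
      filter_upwards [hopen.mem_nhds (mem_range_self t)] with σ hσ
      simp only [hψdef, if_pos hσ]
    have hψtd : HasDerivAt (fun σ => ψ (x, σ))
        (-(α t * A t * A t) / (A t) ^ 2 * φ (x, t) + (A t)⁻¹ * (φt (x, t) * A t)) (τ t) :=
      hmul.congr_of_eventuallyEq heq
    have e1 : ψt (x, τ t) = φt (x, t) - α t * φ (x, t) := by
      have h2 : HasDerivAt (fun σ => ψ (x, σ)) (ψt (x, τ t)) (τ t) :=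
        wst_partial_snd hψsm (x, τ t)
      have := h2.unique hψtd
      rw [this]
      field_simp [hAne t]
      ring
    -- derivative of w ↦ ψ (w, τ t) at x
    have hxfun : (fun w => ψ (w, τ t)) = fun w => (A t)⁻¹ * φ (w, t) :=
      funext fun w => hψval w t
    have e2 : ψx (x, τ t) = (A t)⁻¹ * φx (x, t) := by
      have h2 : HasDerivAt (fun w => ψ (w, τ t)) (ψx (x, τ t)) x :=
        wst_partial_fst hψsm (x, τ t)
      rw [hxfun] at h2
      have h3 : HasDerivAt (fun w => (A t)⁻¹ * φ (w, t)) ((A t)⁻¹ * φx (x, t)) x :=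
        (wst_partial_fst hφ (x, t)).const_mul _
      exact h2.unique h3
    rw [abs_of_pos (inv_pos.mpr (hApos t)), smul_eq_mul, hGdef, hFdef]
    simp only [e1, e2]
    ring
  -- ## bounds and integrability
  set K2 : Set (ℝ×ℝ) := Icc ε M ×ˢ Icc ε M with hK2def
  have hK2cpt : IsCompact K2 := isCompact_Icc.prod isCompact_Icc
  have hK2meas : MeasurableSet K2 := hK2cpt.measurableSet
  have hK'meas : MeasurableSet K' := hK'cpt.measurableSet
  -- bounds for the ψ-integrand
  obtain ⟨Ct, hCt⟩ := hK'cpt.exists_bound_of_continuousOn (wst_cont_partial hψsm (0,1)).continuousOn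
  obtain ⟨Cx, hCx⟩ := hK'cpt.exists_bound_of_continuousOn (wst_cont_partial hψsm (1,0)).continuousOn
  have hCt0 : 0 ≤ Ct := le_trans (norm_nonneg _) (hCt _ hK'ne)
  have hCx0 : 0 ≤ Cx := le_trans (norm_nonneg _) (hCx _ hK'ne)
  have hGbd : ∀ z : ℝ×ℝ, ‖Gfun z‖ ≤ K'.indicator (fun _ => Mp * Ct + Mp ^ 2 / 2 * Cx) z := by
    intro z
    by_cases hz : z ∈ K'
    · rw [Set.indicator_of_mem hz]
      rw [hGdef]
      have h1 : |p z.1 z.2 * ψt z| ≤ Mp * Ct := by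
        rw [abs_mul]
        exact mul_le_mul (hMp z hz) (hCt z hz) (abs_nonneg _) hMp0
      have h2 : |(p z.1 z.2) ^ 2 / 2 * ψx z| ≤ Mp ^ 2 / 2 * Cx := by
        rw [abs_mul]
        refine mul_le_mul ?_ (hCx z hz) (abs_nonneg _) (by positivity)
        rw [abs_div, abs_of_nonneg (sq_nonneg _), abs_two]
        have : (p z.1 z.2) ^ 2 ≤ Mp ^ 2 := by
          rw [← sq_abs]
          exact pow_le_pow_left₀ (abs_nonneg _) (hMp z hz) 2
        linarith
      calc ‖p z.1 z.2 * ψt z + (p z.1 z.2) ^ 2 / 2 * ψx z‖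
          ≤ |p z.1 z.2 * ψt z| + |(p z.1 z.2) ^ 2 / 2 * ψx z| := abs_add_le _ _
        _ ≤ Mp * Ct + Mp ^ 2 / 2 * Cx := add_le_add h1 h2
    · rw [Set.indicator_of_notMem hz]
      have hfz : fderiv ℝ ψ z = 0 := wst_fderiv_zero fun h => hz (hψsupp h)
      rw [hGdef]
      simp [hψtdef, hψxdef, hfz]
  have hGmeas : AEStronglyMeasurable Gfun volume := by
    apply Measurable.aestronglyMeasurable
    apply Measurable.add
    · exact hpm.mul (wst_cont_partial hψsm (0,1)).measurable
    · exact ((hpm.pow_const 2).div_const 2).mul (wst_cont_partial hψsm (1,0)).measurable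
  have hGint : Integrable Gfun volume := by
    refine Integrable.mono' ?_ hGmeas (ae_of_all _ hGbd)
    rw [integrable_indicator_iff hK'meas]
    exact integrableOn_const hK'cpt.measure_lt_top.ne
  -- bounds for the φ-integrand
  obtain ⟨Ca, hCa⟩ := (isCompact_Icc (a := ε) (b := M)).exists_bound_of_continuousOn
    hAinvc.continuousOn
  obtain ⟨Cal, hCal⟩ := (isCompact_Icc (a := ε) (b := M)).exists_bound_of_continuousOn
    hα.continuous.continuousOn
  obtain ⟨Cp, hCp⟩ := hK2cpt.exists_bound_of_continuousOn (hφ.continuous).continuousOn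
  obtain ⟨Cpt, hCpt⟩ := hK2cpt.exists_bound_of_continuousOn (wst_cont_partial hφ (0,1)).continuousOn
  obtain ⟨Cpx, hCpx⟩ := hK2cpt.exists_bound_of_continuousOn (wst_cont_partial hφ (1,0)).continuousOn
  have hεmem : (ε : ℝ) ∈ Icc ε M := ⟨le_refl _, hεM⟩
  have hK2ne : ((ε, ε) : ℝ×ℝ) ∈ K2 := ⟨hεmem, hεmem⟩
  have hCa0 : 0 ≤ Ca := le_trans (norm_nonneg _) (hCa _ hεmem)
  have hCal0 : 0 ≤ Cal := le_trans (norm_nonneg _) (hCal _ hεmem)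
  have hCp0 : 0 ≤ Cp := le_trans (norm_nonneg _) (hCp _ hK2ne)
  have hCpt0 : 0 ≤ Cpt := le_trans (norm_nonneg _) (hCpt _ hK2ne)
  have hCpx0 : 0 ≤ Cpx := le_trans (norm_nonneg _) (hCpx _ hK2ne)
  have humem : ∀ z : ℝ×ℝ, z ∈ K2 → |(A z.2)⁻¹ * p z.1 (τ z.2)| ≤ Ca * Mp := by
    intro z hz
    rw [abs_mul]
    refine mul_le_mul (hCa _ hz.2) (hMp (z.1, τ z.2) ?_) (abs_nonneg _) hCa0
    exact ⟨hz.1, ⟨hτmono.le_iff_le.mpr hz.2.1, hτmono.le_iff_le.mpr hz.2.2⟩⟩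
  have hFbd : ∀ z : ℝ×ℝ, ‖Ffun z‖ ≤ K2.indicator
      (fun _ => Ca * Mp * Cpt + (Ca * Mp) ^ 2 / 2 * Cpx + Cal * (Ca * Mp) * Cp) z := by
    intro z
    by_cases hz : z ∈ K2
    · rw [Set.indicator_of_mem hz, hFdef]
      have hu1 := humem z hz
      have h1 : |(A z.2)⁻¹ * p z.1 (τ z.2) * φt z| ≤ Ca * Mp * Cpt := by
        rw [abs_mul]
        exact mul_le_mul hu1 (hCpt z hz) (abs_nonneg _) (by positivity)
      have h2 : |((A z.2)⁻¹ * p z.1 (τ z.2)) ^ 2 / 2 * φx z| ≤ (Ca * Mp) ^ 2 / 2 * Cpx := by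
        rw [abs_mul]
        refine mul_le_mul ?_ (hCpx z hz) (abs_nonneg _) (by positivity)
        rw [abs_div, abs_of_nonneg (sq_nonneg _), abs_two]
        have : ((A z.2)⁻¹ * p z.1 (τ z.2)) ^ 2 ≤ (Ca * Mp) ^ 2 := by
          rw [← sq_abs]
          exact pow_le_pow_left₀ (abs_nonneg _) hu1 2
        linarith
      have h3 : |α z.2 * ((A z.2)⁻¹ * p z.1 (τ z.2)) * φ z| ≤ Cal * (Ca * Mp) * Cp := by
        rw [abs_mul, abs_mul]
        refine mul_le_mul (mul_le_mul (hCal _ hz.2) hu1 (abs_nonneg _) hCal0)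
          (hCp z hz) (abs_nonneg _) (by positivity)
      calc ‖(A z.2)⁻¹ * p z.1 (τ z.2) * φt z
            + ((A z.2)⁻¹ * p z.1 (τ z.2)) ^ 2 / 2 * φx z
            - α z.2 * ((A z.2)⁻¹ * p z.1 (τ z.2)) * φ z‖
          ≤ |(A z.2)⁻¹ * p z.1 (τ z.2) * φt z
            + ((A z.2)⁻¹ * p z.1 (τ z.2)) ^ 2 / 2 * φx z|
            + |α z.2 * ((A z.2)⁻¹ * p z.1 (τ z.2)) * φ z| := abs_sub _ _
        _ ≤ |(A z.2)⁻¹ * p z.1 (τ z.2) * φt z|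
            + |((A z.2)⁻¹ * p z.1 (τ z.2)) ^ 2 / 2 * φx z|
            + |α z.2 * ((A z.2)⁻¹ * p z.1 (τ z.2)) * φ z| := by
            have := abs_add_le ((A z.2)⁻¹ * p z.1 (τ z.2) * φt z)
              (((A z.2)⁻¹ * p z.1 (τ z.2)) ^ 2 / 2 * φx z)
            linarith
        _ ≤ Ca * Mp * Cpt + (Ca * Mp) ^ 2 / 2 * Cpx + Cal * (Ca * Mp) * Cp := by
            linarith
    · rw [Set.indicator_of_notMem hz]
      have hzsupp : z ∉ tsupport φ := fun h => hz (hbox h)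
      have hfz : fderiv ℝ φ z = 0 := wst_fderiv_zero hzsupp
      have hφz : φ z = 0 := image_eq_zero_of_notMem_tsupport hzsupp
      rw [hFdef]
      simp [hφtdef, hφxdef, hfz, hφz]
  have hFmeas : AEStronglyMeasurable Ffun volume := by
    apply Measurable.aestronglyMeasurable
    have hum : Measurable fun z : ℝ×ℝ => (A z.2)⁻¹ * p z.1 (τ z.2) := by
      apply Measurable.mul
      · exact (hAinvc.comp continuous_snd).measurable
      · exact hpm.comp (measurable_fst.prodMk (hτc.measurable.comp measurable_snd))
    apply Measurable.sub
    · apply Measurable.add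
      · exact hum.mul (wst_cont_partial hφ (0,1)).measurable
      · exact ((hum.pow_const 2).div_const 2).mul (wst_cont_partial hφ (1,0)).measurable
    · exact ((hα.continuous.comp continuous_snd).measurable.mul hum).mul
        hφ.continuous.measurable
  have hFint : Integrable Ffun volume := by
    refine Integrable.mono' ?_ hFmeas (ae_of_all _ hFbd)
    rw [integrable_indicator_iff hK2meas]
    exact integrableOn_const hK2cpt.measure_lt_top.ne
  -- Gfun vanishes off K'
  have hGoff : ∀ z : ℝ×ℝ, z ∉ K' → Gfun z = 0 := by
    intro z hz
    have hfz : fderiv ℝ ψ z = 0 := wst_fderiv_zero fun h => hz (hψsupp h)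
    rw [hGdef]
    simp [hψtdef, hψxdef, hfz]
  -- ## change of variables
  have hvol : (volume : Measure (ℝ×ℝ)) = (volume : Measure ℝ).prod volume :=
    Measure.volume_eq_prod ℝ ℝ
  have hinner : ∀ x : ℝ, ∫ t : ℝ, Ffun (x, t) = ∫ σ : ℝ, Gfun (x, σ) := by
    intro x
    have step1 : ∫ σ : ℝ, Gfun (x, σ) = ∫ σ in range τ, Gfun (x, σ) := by
      refine (setIntegral_eq_integral_of_forall_compl_eq_zero fun σ hσ => ?_).symm
      rcases houtside σ hσ with h | h
      · exact hGoff (x, σ) fun hK => absurd hK.2.1 (not_le.mpr h)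
      · exact hGoff (x, σ) fun hK => absurd hK.2.2 (not_le.mpr h)
    have step2 : ∫ σ in range τ, Gfun (x, σ)
        = ∫ t in (univ : Set ℝ), |(A t)⁻¹| • Gfun (x, τ t) := by
      rw [← image_univ]
      exact integral_image_eq_integral_abs_deriv_smul MeasurableSet.univ
        (fun t _ => (hτ' t).hasDerivAt.hasDerivWithinAt) hinj.injOn _
    rw [step1, step2, Measure.restrict_univ]
    exact (integral_congr_ae (ae_of_all _ fun t => (hkey x t))).symm
  rw [hvol] at hFint hGint ⊢
  rw [hvol] at hG0
  calc ∫ z : ℝ×ℝ, Ffun z ∂((volume : Measure ℝ).prod volume)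
      = ∫ x : ℝ, ∫ t : ℝ, Ffun (x, t) := integral_prod _ hFint
    _ = ∫ x : ℝ, ∫ σ : ℝ, Gfun (x, σ) := by
        exact integral_congr_ae (ae_of_all _ fun x => hinner x)
    _ = ∫ z : ℝ×ℝ, Gfun z ∂((volume : Measure ℝ).prod volume) := (integral_prod _ hGint).symm
    _ = 0 := hG0
end
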